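/- arXiv:0904.1968 — 7 statements merged into one kernel-verified Lean document; each statement's English description precedes it below -/
import Mathlib

section
/- Let G = ⟨z⟩ be a multiplicative cyclic group of order n = p^r with p prime and r ≥ 1, let ω ∈ ℂ be a primitive n-th root of unity, and let φ : ℤG → ℂ be the ring homomorphism with φ(z) = ω. Then ℕG ∩ ker(φ) = ℕG·σ(P_p); that is, an element of ℤG with all coefficients nonnegative is mapped to 0 by φ if and only if it equals α·σ(P_p) for some α ∈ ℕG, where P_p is the unique subgroup of G of order p. -/
/-!
Lift `α` to an integer polynomial `f` with `α = f(z)`. If `φ α = f(ω) = 0`, then `f` is divisible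
by the minimal polynomial `Φ_{p^r}` of `ω`, and `Φ_{p^r} · (X^{p^{r-1}} - 1) = X^{p^r} - 1`
vanishes at `z`; hence `α · (z^{p^{r-1}} - 1) = 0`. Since `z^{p^{r-1}}` generates `P_p`, the
coefficients of `α` are constant on the cosets of `P_p`, so `α = β · σ(P_p)` where `β` is the
restriction of `α` to a transversal. Conversely `φ(σ(P_p))` is the sum of a nontrivial character
of `P_p`, hence `0`.
-/

theorem mem_powers_pow_of_pow_eq_one {G : Type*} [Monoid G] {z h : G} {d p : ℕ}
    (hzh : h ∈ Submonoid.powers z) (hord : orderOf z = d * p) (hp : 0 < p)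
    (hh : h ^ p = 1) : h ∈ Submonoid.powers (z ^ d) := by
  obtain ⟨m, rfl⟩ := hzh
  have hdvd : d * p ∣ m * p := hord ▸ orderOf_dvd_of_pow_eq_one (by rwa [pow_mul])
  obtain ⟨t, rfl⟩ := Nat.dvd_of_mul_dvd_mul_right hp hdvd
  exact ⟨t, (pow_mul z d t).symm⟩

namespace MonoidAlgebra

open Polynomial

variable {R G : Type*}

theorem aeval_single_surjective [CommSemiring R] [Monoid G] {z : G}
    (hz : ∀ g, g ∈ Submonoid.powers z) :
    Function.Surjective (aeval (R := R) (single z (1 : R))) := by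
  intro α
  induction α using induction_on with
  | of g =>
    obtain ⟨k, rfl⟩ := hz g
    exact ⟨X ^ k, by simp [of_apply]⟩
  | add x y hx hy =>
    obtain ⟨f, rfl⟩ := hx
    obtain ⟨g, rfl⟩ := hy
    exact ⟨f + g, map_add _ _ _⟩
  | smul r x hx =>
    obtain ⟨f, rfl⟩ := hx
    exact ⟨r • f, map_smul _ _ _⟩

theorem mul_single_pow_eq_self [Semiring R] [Monoid G] {α : R[G]} {w : G}
    (hα : α * single w 1 = α) (t : ℕ) : α * single (w ^ t) 1 = α := by
  induction t with
  | zero => rw [pow_zero, ← one_def, mul_one]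
  | succ t ih =>
    rw [pow_succ, ← mul_one (1 : R), ← single_mul_single, ← mul_assoc, ih, hα]

theorem coeff_mul_eq_of_mul_single_eq [Semiring R] [Group G] {α : R[G]} {h : G}
    (hα : α * single h 1 = α) (g : G) : α.coeff (g * h) = α.coeff g := by
  simpa using (congr_arg (·.coeff (g * h)) hα).symm

theorem eq_sum_single_mul_sum_subgroup [Semiring R] [Group G] [Fintype G] (P : Subgroup G)
    [Fintype P] {S : Set G} [Fintype S] (hS : Subgroup.IsComplement S P) {α : R[G]}
    (hα : ∀ h ∈ P, α * single h 1 = α) :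
    α = (∑ s : S, single (s : G) (α.coeff s)) * ∑ h : P, single (h : G) 1 := by
  calc α = ∑ g : G, single g (α.coeff g) := by ext g; simp [coeff_sum]
    _ = ∑ x : S × P, single (x.1 * x.2 : G) (α.coeff x.1) := by
      refine Fintype.sum_equiv hS.equiv _ _ fun g => ?_
      have hcoset := coeff_mul_eq_of_mul_single_eq (hα _ (hS.equiv g).2.2) (hS.equiv g).1
      rw [hS.equiv_fst_mul_equiv_snd] at hcoset ⊢
      rw [hcoset]
    _ = _ := by
      rw [Finset.sum_mul_sum, Fintype.sum_prod_type]
      simp only [single_mul_single, mul_one]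

theorem exists_nonneg_eq_mul_sum_subgroup [Semiring R] [PartialOrder R] [IsOrderedAddMonoid R]
    [Group G] [Fintype G] (P : Subgroup G) [Fintype P] {α : R[G]} (hα₀ : ∀ g, 0 ≤ α.coeff g)
    (hα : ∀ h ∈ P, α * single h 1 = α) :
    ∃ β : R[G], (∀ g, 0 ≤ β.coeff g) ∧ α = β * ∑ h : P, single (h : G) 1 := by
  classical
  obtain ⟨S, hS, -⟩ := P.exists_isComplement_left 1
  refine ⟨_, fun g => ?_, eq_sum_single_mul_sum_subgroup P hS hα⟩
  rw [coeff_sum, Finset.sum_apply']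
  refine Finset.sum_nonneg fun s _ => ?_
  rw [coeff_single, Finsupp.single_apply]
  split_ifs
  exacts [hα₀ _, le_rfl]

theorem map_single_pow [Semiring R] [Monoid G] {K : Type*} [Semiring K] (φ : R[G] →+* K)
    (z : G) (m : ℕ) : φ (single (z ^ m) 1) = φ (single z 1) ^ m := by
  rw [← map_pow, single_pow, one_pow]

theorem mul_single_pow_eq_self_of_map_eq_zero {K : Type*} [Field K] [CharZero K] [CommMonoid G]
    {p k : ℕ} [Fact p.Prime] {z : G} (hz : ∀ g, g ∈ Submonoid.powers z)
    (hz₁ : z ^ p ^ (k + 1) = 1) {ω : K} (hω : IsPrimitiveRoot ω (p ^ (k + 1)))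
    (φ : ℤ[G] →+* K) (hφ : φ (single z 1) = ω) {α : ℤ[G]} (hα : φ α = 0) :
    α * single (z ^ p ^ k) 1 = α := by
  obtain ⟨f, rfl⟩ := aeval_single_surjective hz α
  have hpos : 0 < p ^ (k + 1) := pow_pos (Fact.out : p.Prime).pos _
  have hf : aeval ω f = 0 := by
    rw [← hφ, ← φ.toIntAlgHom_apply, aeval_algHom_apply]
    exact hα
  obtain ⟨g, rfl⟩ : cyclotomic (p ^ (k + 1)) ℤ ∣ f :=
    cyclotomic_eq_minpoly hω hpos ▸ minpoly.isIntegrallyClosed_dvd (hω.isIntegral hpos) hf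
  have hvanish : aeval (single z (1 : ℤ)) (X ^ p ^ (k + 1) - 1 : ℤ[X]) = 0 := by
    simp [hz₁, one_def]
  rw [← sub_eq_zero, ← mul_sub_one]
  calc aeval (single z (1 : ℤ)) (cyclotomic (p ^ (k + 1)) ℤ * g) * (single (z ^ p ^ k) 1 - 1)
      = aeval (single z (1 : ℤ)) (cyclotomic (p ^ (k + 1)) ℤ * (X ^ p ^ k - 1) * g) := by
        simp only [map_mul, map_sub, map_pow, aeval_X, map_one, single_pow, one_pow]
        ring
    _ = 0 := by rw [cyclotomic_prime_pow_mul_X_pow_sub_one, map_mul, hvanish, zero_mul]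

theorem eq_one_of_map_single_eq_one [Semiring R] [Monoid G] {K : Type*} [CommSemiring K]
    {z g : G} (hzg : g ∈ Submonoid.powers z) {N : ℕ} (hz₁ : z ^ N = 1) {ω : K}
    (hω : IsPrimitiveRoot ω N) (φ : R[G] →+* K) (hφ : φ (single z 1) = ω)
    (hg : φ (single g 1) = 1) : g = 1 := by
  obtain ⟨m, rfl⟩ := hzg
  obtain ⟨t, rfl⟩ := hω.dvd_of_pow_eq_one m (by rwa [← hφ, ← map_single_pow])
  change z ^ (N * t) = 1
  rw [pow_mul, hz₁, one_pow]

theorem map_sum_subgroup_eq_zero [Semiring R] [Group G] {K : Type*} [CommRing K] [IsDomain K]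
    (φ : R[G] →+* K) (P : Subgroup G) [Fintype P] {h : G} (hh : h ∈ P)
    (hφh : φ (single h 1) ≠ 1) : φ (∑ h : P, single (h : G) 1) = 0 := by
  rw [map_sum]
  refine sum_hom_units_eq_zero ((φ.toMonoidHom.comp (of R G)).comp P.subtype) fun hχ => hφh ?_
  simpa using DFunLike.congr_fun hχ ⟨h, hh⟩

end MonoidAlgebra

open scoped Classical in
/-- Lam–Leung for prime-power order (`s = 1`): if `G = ⟨z⟩` is cyclic of order
`n = p^r` and `φ : ℤG → ℂ` is the ring homomorphism sending `z` to a primitive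
`n`-th root of unity `ω`, then `ℕG ∩ ker φ = ℕG·σ(P_p)`: an element of `ℤG` with
nonnegative coefficients is mapped to `0` by `φ` iff it equals `β·σ(P_p)` for some
`β ∈ ℕG`, where `P_p` is the unique subgroup of `G` of order `p`. -/
theorem nonneg_ker_eq_of_prime_pow_order (p r : ℕ) (hp : p.Prime) (hr : 1 ≤ r)
    (G : Type*) [CommGroup G] [Fintype G]
    (z : G) (hz : ∀ g : G, g ∈ Subgroup.zpowers z) (hcard : Fintype.card G = p ^ r)
    (ω : ℂ) (hω : IsPrimitiveRoot ω (p ^ r))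
    (φ : MonoidAlgebra ℤ G →+* ℂ) (hφ : φ (MonoidAlgebra.single z 1) = ω)
    (P : Subgroup G) (hP : Nat.card P = p)
    (α : MonoidAlgebra ℤ G) (hα : ∀ g : G, 0 ≤ α.coeff g) :
    φ α = 0 ↔ ∃ β : MonoidAlgebra ℤ G, (∀ g : G, 0 ≤ β.coeff g) ∧
      α = β * ∑ h : P, MonoidAlgebra.single (h : G) (1 : ℤ) := by
  obtain ⟨k, rfl⟩ : ∃ k, r = k + 1 := ⟨r - 1, by omega⟩
  have : Fact p.Prime := ⟨hp⟩
  have hzpow : ∀ g, g ∈ Submonoid.powers z := fun g => mem_powers_iff_mem_zpowers.2 (hz g)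
  have hord : orderOf z = p ^ (k + 1) := by
    rw [orderOf_eq_card_of_forall_mem_zpowers hz, Nat.card_eq_fintype_card, hcard]
  have hz₁ : z ^ p ^ (k + 1) = 1 := hord ▸ pow_orderOf_eq_one z
  constructor
  · intro hker
    have hinv := MonoidAlgebra.mul_single_pow_eq_self_of_map_eq_zero hzpow hz₁ hω φ hφ hker
    refine MonoidAlgebra.exists_nonneg_eq_mul_sum_subgroup P hα fun h hh => ?_
    obtain ⟨t, rfl⟩ := mem_powers_pow_of_pow_eq_one (hzpow h) (by rw [hord, pow_succ]) hp.pos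
      (orderOf_dvd_iff_pow_eq_one.1 (hP ▸ P.orderOf_dvd_natCard hh))
    exact MonoidAlgebra.mul_single_pow_eq_self hinv t
  · rintro ⟨β, -, rfl⟩
    obtain ⟨h, hh, hne⟩ := P.bot_or_exists_ne_one.resolve_left fun hbot => by
      simp only [hbot, Subgroup.card_bot] at hP
      exact hp.one_lt.ne hP
    rw [map_mul, MonoidAlgebra.map_sum_subgroup_eq_zero φ P hh
      fun h₁ => hne (MonoidAlgebra.eq_one_of_map_single_eq_one (hzpow h) hz₁ hω φ hφ h₁), mul_zero]
end

section
/- Let G = ⟨z⟩ be a multiplicative cyclic group of order n = p₁^{r₁} p₂^{r₂} where p₁ < p₂ are primes and r₁, r₂ ≥ 1, let ω ∈ ℂ be a primitive n-th root of unity, and let φ : ℤG → ℂ be the ring homomorphism with φ(z) = ω. Then ℕG ∩ ker(φ) = ℕG·σ(P_{p₁}) + ℕG·σ(P_{p₂}); that is, an element of ℤG with all coefficients nonnegative is mapped to 0 by φ if and only if it equals α·σ(P_{p₁}) + β·σ(P_{p₂}) for some α, β ∈ ℕG. -/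
/-!
Let `χ(g) = φ(g)` for `g ∈ G`; then `φ` is the `ℚ`-linear map `f ↦ ∑ f(g) χ(g)` on coefficient
functions `f : G → ℚ`. As `χ` is injective, functions invariant under translation by `P₁` or by
`P₂` lie in its kernel. Its image contains `ℚ(ω)`, so the kernel has dimension at most
`n - totient n = n/p₁ + n/p₂ - n/(p₁p₂)`, and this is also a lower bound for the dimension of the
sum of the two spaces of invariant functions (their intersection consists of functions invariant
under `P₁P₂`). Hence the kernel is that sum.

So the coefficient function `A` of `α` satisfies `A(g h₁ h₂) + A(g) = A(g h₁) + A(g h₂)` for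
`hᵢ ∈ Pᵢ`. The minimum `B(g)` of `A` over `gP₁` is then a nonnegative `P₁`-invariant function,
and `A - B` is nonnegative and `P₂`-invariant. Finally an `H`-invariant function is `β · σ(H)`,
where `β` is its restriction to a set of coset representatives.
-/

open Module

section Invariants

variable {G : Type*} [Group G] (R : Type*) [CommSemiring R]

def invariants (H : Subgroup G) : Submodule R (G → R) where
  carrier := {f | ∀ h ∈ H, ∀ g, f (g * h) = f g}
  add_mem' hf hf' h hh g := by simp [hf h hh g, hf' h hh g]
  zero_mem' _ _ _ := rfl
  smul_mem' c f hf h hh g := by simp [hf h hh g]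

variable {R}

theorem invariants_eq_range_funLeft (H : Subgroup G) :
    invariants R H =
      LinearMap.range (LinearMap.funLeft R R (QuotientGroup.mk : G → G ⧸ H)) := by
  ext f
  constructor
  · intro hf
    refine ⟨Quotient.lift f fun a b hab => ?_, rfl⟩
    rw [← hf _ (QuotientGroup.leftRel_apply.mp hab) a, mul_inv_cancel_left]
  · rintro ⟨F, rfl⟩ h hh g
    simp [LinearMap.funLeft_apply, QuotientGroup.mk_mul_of_mem g hh]

theorem finrank_invariants (K : Type*) [Field K] [Finite G] (H : Subgroup G) :
    finrank K (invariants K H) = H.index := by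
  have : Fintype (G ⧸ H) := Fintype.ofFinite _
  rw [invariants_eq_range_funLeft, LinearMap.finrank_range_of_inj
    (LinearMap.funLeft_injective_of_surjective _ _ _ QuotientGroup.mk_surjective),
    finrank_fintype_fun_eq_card, Subgroup.index, Nat.card_eq_fintype_card]

theorem invariants_inf_le_invariants_sup (H₁ H₂ : Subgroup G) :
    invariants R H₁ ⊓ invariants R H₂ ≤ invariants R (H₁ ⊔ H₂) := by
  rintro f ⟨hf₁, hf₂⟩
  let periods : Subgroup G :=
    { carrier := {h | ∀ g, f (g * h) = f g}
      one_mem' := by simp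
      mul_mem' := fun ha hb g => by rw [← mul_assoc, hb, ha]
      inv_mem' := fun {a} ha g => by rw [← ha (g * a⁻¹), inv_mul_cancel_right] }
  exact fun h hh => (sup_le (show H₁ ≤ periods from hf₁) hf₂ : H₁ ⊔ H₂ ≤ periods) hh

end Invariants

section LinearCombination

variable {G : Type*} [Group G] [Fintype G]

theorem totient_le_finrank_range_linearCombination {L : Type*} [Field L] [CharZero L]
    (χ : G →* L) {z : G} {n : ℕ} [NeZero n] (hz : IsPrimitiveRoot (χ z) n) :
    n.totient ≤ finrank ℚ (LinearMap.range (Fintype.linearCombination ℚ χ)) := by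
  have hint : IsIntegral ℚ (χ z) := (hz.isIntegral (NeZero.pos n)).tower_top
  have hle : Subalgebra.toSubmodule (IntermediateField.adjoin ℚ {χ z}).toSubalgebra ≤
      LinearMap.range (Fintype.linearCombination ℚ χ) := by
    rw [IntermediateField.adjoin_simple_toSubalgebra_of_isAlgebraic hint.isAlgebraic,
      Algebra.adjoin_eq_span, Fintype.range_linearCombination]
    refine Submodule.span_mono (Submonoid.closure_le.mpr ?_ : _ ≤ MonoidHom.mrange χ)
    simp
  calc n.totient = finrank ℚ (IntermediateField.adjoin ℚ {χ z}) := by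
        rw [IntermediateField.adjoin.finrank hint,
          ← Polynomial.cyclotomic_eq_minpoly_rat hz (NeZero.pos n), Polynomial.natDegree_cyclotomic]
    _ ≤ _ := Submodule.finrank_mono hle

theorem finrank_ker_linearCombination_add_totient_le {L : Type*} [Field L] [CharZero L]
    (χ : G →* L) {z : G} {n : ℕ} [NeZero n] (hz : IsPrimitiveRoot (χ z) n) :
    finrank ℚ (LinearMap.ker (Fintype.linearCombination ℚ χ)) + n.totient ≤
      Fintype.card G := by
  have := LinearMap.finrank_range_add_finrank_ker (Fintype.linearCombination ℚ χ)
  rw [finrank_fintype_fun_eq_card] at this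
  have := totient_le_finrank_range_linearCombination χ hz
  omega

theorem invariants_le_ker_linearCombination {K A : Type*} [CommSemiring K] [CommRing A]
    [IsDomain A] [Algebra K A] (χ : G →* A) {H : Subgroup G} {h : G} (hh : h ∈ H)
    (hχ : χ h ≠ 1) : invariants K H ≤ LinearMap.ker (Fintype.linearCombination K χ) := by
  intro f hf
  rw [LinearMap.mem_ker, Fintype.linearCombination_apply]
  set s := ∑ g, f g • χ g
  have hs : s * χ h = s := calc
    s * χ h = ∑ g, f (g * h) • χ (g * h) := by
      simp only [s, Finset.sum_mul, hf h hh, map_mul, smul_mul_assoc]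
    _ = s := Fintype.sum_equiv (Equiv.mulRight h) _ _ fun _ => rfl
  have : s * (χ h - 1) = 0 := by rw [mul_sub, hs, mul_one, sub_self]
  exact (mul_eq_zero.mp this).resolve_right (sub_ne_zero.mpr hχ)

end LinearCombination

theorem Nat.totient_add_div_add_div_of_primeFactors_eq_pair {n p q : ℕ} (hp : p.Prime)
    (hq : q.Prime) (hpq : p ≠ q) (hn : n.primeFactors = {p, q}) :
    n.totient + n / p + n / q = n + n / (p * q) := by
  have hdvd : p * q ∣ n := by
    simpa [hn, Finset.prod_pair hpq] using Nat.prod_primeFactors_dvd n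
  obtain ⟨c, rfl⟩ := hdvd
  rw [Nat.totient_eq_div_primeFactors_mul, hn, Finset.prod_pair hpq, Finset.prod_pair hpq]
  obtain ⟨a, rfl⟩ : ∃ a, p = a + 1 := ⟨p - 1, by have := hp.pos; omega⟩
  obtain ⟨b, rfl⟩ : ∃ b, q = b + 1 := ⟨q - 1, by have := hq.pos; omega⟩
  have h1 : (a + 1) * (b + 1) * c / (a + 1) = (b + 1) * c := by
    rw [mul_assoc, Nat.mul_div_cancel_left _ (by omega)]
  have h2 : (a + 1) * (b + 1) * c / (b + 1) = (a + 1) * c := by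
    rw [mul_comm (a + 1), mul_assoc, Nat.mul_div_cancel_left _ (by omega)]
  have h3 : (a + 1) * (b + 1) * c / ((a + 1) * (b + 1)) = c :=
    Nat.mul_div_cancel_left _ (by positivity)
  simp only [h1, h2, h3, Nat.add_sub_cancel]
  ring

theorem Nat.primeFactors_prime_pow_mul_prime_pow {p q a b : ℕ} (hp : p.Prime) (hq : q.Prime)
    (ha : a ≠ 0) (hb : b ≠ 0) : (p ^ a * q ^ b).primeFactors = {p, q} := by
  rw [Nat.primeFactors_mul (pow_ne_zero _ hp.ne_zero) (pow_ne_zero _ hq.ne_zero),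
    Nat.primeFactors_pow _ ha, Nat.primeFactors_pow _ hb, hp.primeFactors, hq.primeFactors]
  rfl

section Kernel

variable {G : Type*} [Group G]

theorem exists_mem_map_ne_one {M : Type*} [Monoid M] {χ : G →* M} (hχ : Function.Injective χ)
    {H : Subgroup G} (hH : 1 < Nat.card H) : ∃ h ∈ H, χ h ≠ 1 := by
  obtain ⟨h, hh, hne⟩ :=
    H.bot_or_exists_ne_one.resolve_left fun hbot => by simp [hbot] at hH
  exact ⟨h, hh, fun h1 => hne (hχ (h1.trans χ.map_one.symm))⟩

theorem Subgroup.index_sup_le_card_div [Finite G] {P₁ P₂ : Subgroup G} {p₁ p₂ : ℕ}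
    (hp₁ : p₁.Prime) (hp₂ : p₂.Prime) (hne : p₁ ≠ p₂) (hP₁ : Nat.card P₁ = p₁)
    (hP₂ : Nat.card P₂ = p₂) : (P₁ ⊔ P₂).index ≤ Nat.card G / (p₁ * p₂) := by
  have hdvd : p₁ * p₂ ∣ Nat.card ↥(P₁ ⊔ P₂) :=
    ((Nat.coprime_primes hp₁ hp₂).mpr hne).mul_dvd_of_dvd_of_dvd
      (hP₁ ▸ Subgroup.card_dvd_of_le le_sup_left) (hP₂ ▸ Subgroup.card_dvd_of_le le_sup_right)
  rw [Nat.le_div_iff_mul_le (Nat.mul_pos hp₁.pos hp₂.pos), ← Subgroup.index_mul_card (P₁ ⊔ P₂)]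
  exact Nat.mul_le_mul_left _ (Nat.le_of_dvd Nat.card_pos hdvd)

theorem Subgroup.index_eq_card_div {H : Subgroup G} {p : ℕ} (hp : 0 < p)
    (hH : Nat.card H = p) : H.index = Nat.card G / p := by
  rw [← H.index_mul_card, hH, Nat.mul_div_cancel _ hp]

theorem ker_linearCombination_eq_sup_invariants [Fintype G] {L : Type*} [Field L]
    [CharZero L] {χ : G →* L} (hχ : Function.Injective χ) {z : G}
    (hz : IsPrimitiveRoot (χ z) (Fintype.card G))
    {p₁ p₂ : ℕ} (hp₁ : p₁.Prime) (hp₂ : p₂.Prime) (hne : p₁ ≠ p₂)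
    (hG : (Fintype.card G).primeFactors = {p₁, p₂}) {P₁ P₂ : Subgroup G}
    (hP₁ : Nat.card P₁ = p₁) (hP₂ : Nat.card P₂ = p₂) :
    LinearMap.ker (Fintype.linearCombination ℚ χ) = invariants ℚ P₁ ⊔ invariants ℚ P₂ := by
  have : NeZero (Fintype.card G) := ⟨Fintype.card_ne_zero⟩
  have hle : ∀ {P : Subgroup G} {p : ℕ}, p.Prime → Nat.card P = p →
      invariants ℚ P ≤ LinearMap.ker (Fintype.linearCombination ℚ χ) := fun hp hP => by
    obtain ⟨h, hh, hχh⟩ := exists_mem_map_ne_one hχ (hP ▸ hp.one_lt)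
    exact invariants_le_ker_linearCombination χ hh hχh
  refine (Submodule.eq_of_le_of_finrank_le (sup_le (hle hp₁ hP₁) (hle hp₂ hP₂)) ?_).symm
  have hsup := Submodule.finrank_sup_add_finrank_inf_eq (invariants ℚ P₁) (invariants ℚ P₂)
  have hinf := Submodule.finrank_mono (invariants_inf_le_invariants_sup (R := ℚ) P₁ P₂)
  have hker := finrank_ker_linearCombination_add_totient_le χ hz
  have htot := Nat.totient_add_div_add_div_of_primeFactors_eq_pair hp₁ hp₂ hne hG
  have h₁₂ := Subgroup.index_sup_le_card_div hp₁ hp₂ hne hP₁ hP₂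
  rw [finrank_invariants, finrank_invariants, Subgroup.index_eq_card_div hp₁.pos hP₁,
    Subgroup.index_eq_card_div hp₂.pos hP₂] at hsup
  rw [finrank_invariants] at hinf
  rw [Nat.card_eq_fintype_card] at hsup h₁₂
  omega

end Kernel

section Decomposition

variable {G : Type*} [CommGroup G]

theorem add_eq_add_of_mem_sup_invariants {R : Type*} [CommSemiring R] {H₁ H₂ : Subgroup G}
    {f : G → R} (hf : f ∈ invariants R H₁ ⊔ invariants R H₂) {h₁ h₂ : G} (hh₁ : h₁ ∈ H₁)
    (hh₂ : h₂ ∈ H₂) (g : G) : f (g * h₁ * h₂) + f g = f (g * h₁) + f (g * h₂) := by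
  obtain ⟨b, hb, c, hc, rfl⟩ := Submodule.mem_sup.mp hf
  have hb₂ : b (g * h₁ * h₂) = b (g * h₂) := by rw [mul_right_comm, hb h₁ hh₁]
  simp only [Pi.add_apply, hb₂, hb h₁ hh₁, hc h₂ hh₂]
  ring

noncomputable def cosetInf (H : Subgroup G) (A : G → ℤ) (g : G) : ℤ :=
  ⨅ h : H, A (g * h)

variable {H : Subgroup G} {A : G → ℤ}

theorem cosetInf_le [Finite H] {h : G} (hh : h ∈ H) (g : G) : cosetInf H A g ≤ A (g * h) :=
  ciInf_le (Set.finite_range _).bddBelow (⟨h, hh⟩ : H)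

theorem exists_mul_eq_cosetInf [Finite H] (g : G) : ∃ h ∈ H, A (g * h) = cosetInf H A g := by
  obtain ⟨⟨h, hh⟩, e⟩ := exists_eq_ciInf_of_finite (f := fun h : H => A (g * h))
  exact ⟨h, hh, e⟩

theorem cosetInf_mul_of_mem {h : G} (hh : h ∈ H) (g : G) :
    cosetInf H A (g * h) = cosetInf H A g := by
  simp only [cosetInf, mul_assoc]
  exact (Equiv.mulLeft (⟨h, hh⟩ : H)).iInf_comp (g := fun x : H => A (g * x))

theorem cosetInf_eq_add [Finite H] {g g' : G} {d : ℤ}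
    (hd : ∀ h ∈ H, A (g' * h) = A (g * h) + d) : cosetInf H A g' = cosetInf H A g + d := by
  have : (fun h : H => A (g' * h)) = fun h : H => A (g * h) + d := funext fun h => hd h h.2
  rw [cosetInf, cosetInf, this]
  exact ((OrderIso.addRight d).map_ciInf (Set.finite_range _).bddBelow).symm

theorem exists_nonneg_invariants_add [Finite G] {H₁ H₂ : Subgroup G} (hA : 0 ≤ A)
    (hA₁₂ : ∀ h₁ ∈ H₁, ∀ h₂ ∈ H₂, ∀ g, A (g * h₁ * h₂) + A g = A (g * h₁) + A (g * h₂)) :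
    ∃ B C : G → ℤ, 0 ≤ B ∧ 0 ≤ C ∧ B ∈ invariants ℤ H₁ ∧ C ∈ invariants ℤ H₂ ∧ A = B + C := by
  refine ⟨cosetInf H₁ A, A - cosetInf H₁ A, fun g => ?_, fun g => ?_,
    fun h hh g => cosetInf_mul_of_mem hh g, fun h₂ hh₂ g => ?_, by simp⟩
  · obtain ⟨h, -, e⟩ := exists_mul_eq_cosetInf (A := A) (H := H₁) g
    exact e ▸ hA _
  · simpa using cosetInf_le (A := A) H₁.one_mem g
  · -- translating by `h₂` shifts `A` on the coset `gH₁` by the constant `A (g * h₂) - A g`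
    have := cosetInf_eq_add (A := A) (H := H₁) (g := g) (g' := g * h₂) (d := A (g * h₂) - A g)
      fun h₁ hh₁ => by linarith [mul_right_comm g h₁ h₂ ▸ hA₁₂ h₁ hh₁ h₂ hh₂ g]
    simp only [Pi.sub_apply, this]
    ring

end Decomposition

theorem MonoidHom.injective_of_isPrimitiveRoot {G M : Type*} [Group G] [Finite G]
    [CommMonoid M] (χ : G →* M) {z : G} (hz : ∀ g, g ∈ Subgroup.zpowers z)
    (hχz : IsPrimitiveRoot (χ z) (orderOf z)) : Function.Injective χ := by
  refine (injective_iff_map_eq_one χ).mpr fun g hg => ?_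
  obtain ⟨k, rfl⟩ := mem_powers_iff_mem_zpowers.mpr (hz g)
  rw [map_pow] at hg
  exact orderOf_dvd_iff_pow_eq_one.mp ((hχz.pow_eq_one_iff_dvd k).mp hg)

section GroupRing

open MonoidAlgebra

variable {G : Type*} [Group G]

theorem coeff_mul_sum_single (x : MonoidAlgebra ℤ G) (H : Subgroup G) [Fintype H] (g : G) :
    (x * ∑ h : H, single (h : G) (1 : ℤ)).coeff g = ∑ h : H, x.coeff (g * (h : G)⁻¹) := by
  simp [Finset.mul_sum, coeff_sum, coeff_mul_single_apply]

theorem exists_nonneg_mul_sum_single_eq [Finite G] (H : Subgroup G) [Fintype H] {B : G → ℤ}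
    (hB0 : 0 ≤ B) (hB : B ∈ invariants ℤ H) :
    ∃ β : MonoidAlgebra ℤ G, (∀ g, 0 ≤ β.coeff g) ∧
      ∀ g, (β * ∑ h : H, single (h : G) (1 : ℤ)).coeff g = B g := by
  classical
  refine ⟨ofCoeff (Finsupp.equivFunOnFinite.symm fun x =>
    if x = (x : G ⧸ H).out then B x else 0), fun g => ?_, fun g => ?_⟩
  · simp only [Finsupp.equivFunOnFinite_symm_apply_apply]
    split_ifs
    exacts [hB0 g, le_rfl]
  obtain ⟨k, hk⟩ := QuotientGroup.mk_out_eq_mul H g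
  have hrep : ∀ h : H, g * (h : G)⁻¹ = ((g * (h : G)⁻¹ : G) : G ⧸ H).out ↔ h = k⁻¹ := by
    intro h
    rw [QuotientGroup.mk_mul_of_mem g (inv_mem h.2), hk, mul_right_inj, inv_eq_iff_eq_inv,
      Subtype.ext_iff, Subgroup.coe_inv]
  simp only [coeff_mul_sum_single, Finsupp.equivFunOnFinite_symm_apply_apply, hrep,
    Finset.sum_ite_eq', Finset.mem_univ, if_true, Subgroup.coe_inv, inv_inv]
  exact hB k k.2 g

theorem ringHom_apply_eq_linearCombination [Fintype G] {L : Type*} [Field L]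
    [CharZero L] (φ : MonoidAlgebra ℤ G →+* L) (x : MonoidAlgebra ℤ G) :
    φ x = Fintype.linearCombination ℚ ((φ : MonoidAlgebra ℤ G →* L).comp (of ℤ G))
      fun g => (x.coeff g : ℚ) := by
  conv_lhs => rw [← sum_coeff_single x]
  rw [map_finsuppSum, Finsupp.sum_fintype _ _ (by simp), Fintype.linearCombination_apply]
  refine Finset.sum_congr rfl fun g _ => ?_
  calc φ (single g (x.coeff g)) = x.coeff g • φ (single g 1) := by
        rw [← map_zsmul, smul_single', mul_one]
    _ = _ := (Int.cast_smul_eq_zsmul ℚ _ _).symm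

theorem ringHom_sum_single_eq_zero {R : Type*} [CommRing R] [IsDomain R]
    {φ : MonoidAlgebra ℤ G →+* R}
    (hφ : Function.Injective ((φ : MonoidAlgebra ℤ G →* R).comp (of ℤ G)))
    {H : Subgroup G} [Fintype H] (hH : 1 < Nat.card H) :
    φ (∑ h : H, single (h : G) (1 : ℤ)) = 0 := by
  obtain ⟨x, hx, hφx⟩ := exists_mem_map_ne_one hφ hH
  rw [map_sum]
  refine sum_hom_units_eq_zero (((φ : MonoidAlgebra ℤ G →* R).comp (of ℤ G)).comp H.subtype)
    fun e => hφx ?_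
  simpa using DFunLike.congr_fun e ⟨x, hx⟩

end GroupRing

open scoped Classical in
/-- Lam–Leung for two prime divisors (`s = 2`): if `G = ⟨z⟩` is cyclic of order
`n = p₁^{r₁} p₂^{r₂}` with `p₁ < p₂` primes and `φ : ℤG → ℂ` is the ring
homomorphism sending `z` to a primitive `n`-th root of unity `ω`, then
`ℕG ∩ ker φ = ℕG·σ(P_{p₁}) + ℕG·σ(P_{p₂})`: an element of `ℤG` with nonnegative
coefficients is mapped to `0` by `φ` iff it equals `β·σ(P_{p₁}) + γ·σ(P_{p₂})`
for some `β, γ ∈ ℕG`. -/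
theorem nonneg_ker_eq_of_two_prime_order (p₁ p₂ r₁ r₂ : ℕ)
    (hp₁ : p₁.Prime) (hp₂ : p₂.Prime) (hlt : p₁ < p₂) (hr₁ : 1 ≤ r₁) (hr₂ : 1 ≤ r₂)
    (n : ℕ) (hn : n = p₁ ^ r₁ * p₂ ^ r₂)
    (G : Type*) [CommGroup G] [Fintype G]
    (z : G) (hz : ∀ g : G, g ∈ Subgroup.zpowers z) (hcard : Fintype.card G = n)
    (ω : ℂ) (hω : IsPrimitiveRoot ω n)
    (φ : MonoidAlgebra ℤ G →+* ℂ) (hφ : φ (MonoidAlgebra.single z 1) = ω)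
    (P₁ : Subgroup G) (hP₁ : Nat.card P₁ = p₁)
    (P₂ : Subgroup G) (hP₂ : Nat.card P₂ = p₂)
    (α : MonoidAlgebra ℤ G) (hα : ∀ g : G, 0 ≤ α.coeff g) :
    φ α = 0 ↔ ∃ β γ : MonoidAlgebra ℤ G,
      (∀ g : G, 0 ≤ β.coeff g) ∧ (∀ g : G, 0 ≤ γ.coeff g) ∧
      α = β * (∑ h : P₁, MonoidAlgebra.single (h : G) (1 : ℤ)) +
          γ * (∑ h : P₂, MonoidAlgebra.single (h : G) (1 : ℤ)) := by
  set χ : G →* ℂ := (φ : MonoidAlgebra ℤ G →* ℂ).comp (MonoidAlgebra.of ℤ G)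
  have hχz : IsPrimitiveRoot (χ z) (Fintype.card G) := hcard ▸ hφ ▸ hω
  have hχ : Function.Injective χ := χ.injective_of_isPrimitiveRoot hz <| by
    rwa [orderOf_eq_card_of_forall_mem_zpowers hz, Nat.card_eq_fintype_card]
  have hG : (Fintype.card G).primeFactors = {p₁, p₂} := by
    rw [hcard, hn, Nat.primeFactors_prime_pow_mul_prime_pow hp₁ hp₂ (by omega) (by omega)]
  refine ⟨fun hα0 => ?_, ?_⟩
  · have hker : (fun g => (α.coeff g : ℚ)) ∈ invariants ℚ P₁ ⊔ invariants ℚ P₂ := by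
      rw [← ker_linearCombination_eq_sup_invariants hχ hχz hp₁ hp₂ hlt.ne hG hP₁ hP₂,
        LinearMap.mem_ker, ← ringHom_apply_eq_linearCombination, hα0]
    obtain ⟨B, C, hB0, hC0, hB, hC, hBC⟩ :=
      exists_nonneg_invariants_add (A := fun g => α.coeff g) hα fun h₁ hh₁ h₂ hh₂ g => by
        exact_mod_cast add_eq_add_of_mem_sup_invariants hker hh₁ hh₂ g
    obtain ⟨β, hβ0, hβ⟩ := exists_nonneg_mul_sum_single_eq P₁ hB0 hB
    obtain ⟨γ, hγ0, hγ⟩ := exists_nonneg_mul_sum_single_eq P₂ hC0 hC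
    refine ⟨β, γ, hβ0, hγ0, MonoidAlgebra.ext (Finsupp.ext fun g => ?_)⟩
    simp [hβ, hγ, congrFun hBC g]
  · rintro ⟨β, γ, -, -, rfl⟩
    simp [ringHom_sum_single_eq_zero hχ (hP₁ ▸ hp₁.one_lt),
      ringHom_sum_single_eq_zero hχ (hP₂ ▸ hp₂.one_lt)]
end

section
/- Let ω ∈ ℂ be a primitive 12th root of unity, let G = ⟨z⟩ be cyclic of order 12, let P₁ = {1, z⁶} and P₂ = {1, z⁴, z⁸} be the subgroups of G of orders 2 and 3, and let φ : ℤG → ℂ be the ring homomorphism with φ(z) = ω. Then φ(z + z⁵ + z⁹) = ω + ω⁵ + ω⁹ = 0, yet z + z⁵ + z⁹ cannot be written as α·σ(P₂) + β·σ(P₁) where α is a nonnegative integer combination of elements of P₁ and β is a nonnegative integer combination of elements of P₂. (In particular, Theorem 3.3 of Lam–Leung as literally stated, ℕG ∩ ker(φ) = ℕP₁·σ(P₂) + ℕP₂·σ(P₁), is false for n = 12.) -/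
/-!
Every admissible `α·σ(P₂) + β·σ(P₁)` is supported on the subgroup `⟨z²⟩ ⊇ P₁ ∪ P₂`, since
being supported on a subgroup is preserved by sums and products; so its coefficient at `z`
vanishes, while that of `z + z⁵ + z⁹` does not. Here `z ∉ ⟨z²⟩` because the order of `z` is a multiple of
`orderOf ω = 12`, hence even. The vanishing of `ω + ω⁵ + ω⁹ = ω (1 + ω⁴ + ω⁸)` is the vanishing
of the sum of the powers of the primitive cube root `ω⁴`.
-/

open scoped Pointwise

namespace MonoidAlgebra

variable {k G : Type*} [Semiring k]

theorem single_mem_supported {s : Set G} {a : G} (r : k) (ha : a ∈ s) :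
    single a r ∈ supported k k s := by
  rw [mem_supported, coeff_single]
  exact (Finset.coe_subset.2 Finsupp.support_single_subset).trans (by simpa using ha)

theorem mul_mem_supported [Monoid G] {S : Submonoid G} {x y : MonoidAlgebra k G}
    (hx : x ∈ supported k k (S : Set G)) (hy : y ∈ supported k k (S : Set G)) :
    x * y ∈ supported k k (S : Set G) := by
  classical
  rw [mem_supported] at *
  calc ((x * y).coeff.support : Set G)
      ⊆ ↑(x.coeff.support * y.coeff.support) := Finset.coe_subset.2 (support_coeff_mul_subset x y)
    _ = ↑x.coeff.support * ↑y.coeff.support := Finset.coe_mul _ _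
    _ ⊆ S := Submonoid.mul_subset hx hy

theorem orderOf_map_single_one_dvd {R : Type*} [Semiring R] [Monoid G]
    (φ : MonoidAlgebra k G →+* R) (g : G) : orderOf (φ (single g 1)) ∣ orderOf g :=
  orderOf_map_dvd ((φ : MonoidAlgebra k G →* R).comp (of k G)) g

end MonoidAlgebra

theorem self_notMem_zpowers_sq {G : Type*} [Group G] {z : G} (h : 2 ∣ orderOf z) :
    z ∉ Subgroup.zpowers (z ^ 2) := by
  rintro ⟨n, hn⟩
  have : (2 * n : ℤ) ≡ 1 [ZMOD orderOf z] := by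
    rw [← zpow_eq_zpow_iff_modEq, zpow_one, zpow_mul, zpow_two, ← sq]; exact hn
  have := (Int.natCast_dvd_natCast.2 h).trans (Int.ModEq.dvd this.symm)
  omega

theorem IsPrimitiveRoot.one_add_self_add_sq_eq_zero {R : Type*} [CommRing R] [IsDomain R]
    {ζ : R} (hζ : IsPrimitiveRoot ζ 3) : 1 + ζ + ζ ^ 2 = 0 := by
  simpa [Finset.sum_range_succ, add_assoc] using hζ.geom_sum_eq_zero (by norm_num)

open MonoidAlgebra in
theorem not_exists_decomposition_of_two_dvd_orderOf {G : Type*} [Group G] {z : G}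
    (hz : 2 ∣ orderOf z) :
    ¬ ∃ α β : MonoidAlgebra ℤ G,
        (∀ g : G, α.coeff g ≠ 0 → g = 1 ∨ g = z ^ 6) ∧
        (∀ g : G, β.coeff g ≠ 0 → g = 1 ∨ g = z ^ 4 ∨ g = z ^ 8) ∧
        single z 1 + single (z ^ 5) 1 + single (z ^ 9) 1 =
          α * (single 1 1 + single (z ^ 4) 1 + single (z ^ 8) 1) +
          β * (single 1 1 + single (z ^ 6) 1) := by
  classical
  rintro ⟨α, β, hα, hβ, heq⟩
  set H := Subgroup.zpowers (z ^ 2)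
  have hH (n : ℕ) : z ^ (2 * n) ∈ H := by rw [pow_mul]; exact Subgroup.npow_mem_zpowers _ n
  have hP₁ (g : G) : g = 1 ∨ g = z ^ 6 → g ∈ H := by
    rintro (rfl | rfl)
    exacts [H.one_mem, hH 3]
  have hP₂ (g : G) : g = 1 ∨ g = z ^ 4 ∨ g = z ^ 8 → g ∈ H := by
    rintro (rfl | rfl | rfl)
    exacts [H.one_mem, hH 2, hH 4]
  have hsupp {x : MonoidAlgebra ℤ G} (hx : ∀ g, x.coeff g ≠ 0 → g ∈ H) :
      x ∈ supported ℤ ℤ (H : Set G) := fun g hg ↦ hx g (Finsupp.mem_support_iff.1 hg)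
  have hσ₁ : single 1 1 + single (z ^ 6) 1 ∈ supported ℤ ℤ (H : Set G) :=
    add_mem (single_mem_supported 1 H.one_mem) (single_mem_supported 1 (hH 3))
  have hσ₂ : single 1 1 + single (z ^ 4) 1 + single (z ^ 8) 1 ∈ supported ℤ ℤ (H : Set G) :=
    add_mem (add_mem (single_mem_supported 1 H.one_mem) (single_mem_supported 1 (hH 2)))
      (single_mem_supported 1 (hH 4))
  have hrhs := add_mem (mul_mem_supported (hsupp fun g hg ↦ hP₁ g (hα g hg)) hσ₂)
    (mul_mem_supported (hsupp fun g hg ↦ hP₂ g (hβ g hg)) hσ₁)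
  have h0 := mem_supported'.1 hrhs z (self_notMem_zpowers_sq hz)
  rw [← heq] at h0
  simp only [coeff_add, coeff_single, Finsupp.add_apply, Finsupp.single_apply] at h0
  split_ifs at h0 <;> omega

open MonoidAlgebra in
theorem lam_leung_counterexample_n12_general
    (G : Type*) [CommGroup G]
    (z : G)
    (ω : ℂ) (hω : IsPrimitiveRoot ω 12)
    (φ : MonoidAlgebra ℤ G →+* ℂ) (hφ : φ (MonoidAlgebra.single z 1) = ω) :
    φ (MonoidAlgebra.single z 1 + MonoidAlgebra.single (z ^ 5) 1 +
        MonoidAlgebra.single (z ^ 9) 1) = ω + ω ^ 5 + ω ^ 9 ∧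
    ω + ω ^ 5 + ω ^ 9 = 0 ∧
    ¬ ∃ α β : MonoidAlgebra ℤ G,
        (∀ g : G, 0 ≤ α.coeff g) ∧ (∀ g : G, α.coeff g ≠ 0 → g = 1 ∨ g = z ^ 6) ∧
        (∀ g : G, 0 ≤ β.coeff g) ∧ (∀ g : G, β.coeff g ≠ 0 → g = 1 ∨ g = z ^ 4 ∨ g = z ^ 8) ∧
        MonoidAlgebra.single z 1 + MonoidAlgebra.single (z ^ 5) 1 +
            MonoidAlgebra.single (z ^ 9) 1 =
          α * (MonoidAlgebra.single (1 : G) (1 : ℤ) + MonoidAlgebra.single (z ^ 4) 1 +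
                MonoidAlgebra.single (z ^ 8) 1) +
          β * (MonoidAlgebra.single (1 : G) (1 : ℤ) + MonoidAlgebra.single (z ^ 6) 1) := by
  have hφ_pow (n : ℕ) : φ (single (z ^ n) 1) = ω ^ n := by
    rw [← hφ, ← map_pow, single_pow, one_pow]
  refine ⟨by rw [map_add, map_add, hφ, hφ_pow, hφ_pow], ?_, ?_⟩
  · have hcube : IsPrimitiveRoot (ω ^ 4) 3 := hω.pow_of_dvd (by norm_num) (by norm_num)
    linear_combination ω * hcube.one_add_self_add_sq_eq_zero
  rintro ⟨α, β, -, hα, -, hβ, heq⟩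
  refine not_exists_decomposition_of_two_dvd_orderOf ?_ ⟨α, β, hα, hβ, heq⟩
  calc 2 ∣ 12 := by norm_num
    _ = orderOf ω := hω.eq_orderOf
    _ ∣ orderOf z := hφ ▸ orderOf_map_single_one_dvd φ z

/-- Counterexample to the literal statement of Lam–Leung Theorem 3.3 for `n = 12`:
with `G = ⟨z⟩` cyclic of order `12`, `ω` a primitive `12`-th root of unity and
`φ : ℤG → ℂ` the ring homomorphism with `φ(z) = ω`, one has
`φ(z + z⁵ + z⁹) = ω + ω⁵ + ω⁹ = 0`, yet `z + z⁵ + z⁹` cannot be written as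
`α·σ(P₂) + β·σ(P₁)` with `α ∈ ℕP₁` and `β ∈ ℕP₂`, where `P₁ = {1, z⁶}` and
`P₂ = {1, z⁴, z⁸}`. -/
theorem lam_leung_counterexample_n12
    (G : Type*) [CommGroup G] [Fintype G]
    (z : G) (hz : ∀ g : G, g ∈ Subgroup.zpowers z) (hcard : Fintype.card G = 12)
    (ω : ℂ) (hω : IsPrimitiveRoot ω 12)
    (φ : MonoidAlgebra ℤ G →+* ℂ) (hφ : φ (MonoidAlgebra.single z 1) = ω) :
    φ (MonoidAlgebra.single z 1 + MonoidAlgebra.single (z ^ 5) 1 +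
        MonoidAlgebra.single (z ^ 9) 1) = ω + ω ^ 5 + ω ^ 9 ∧
    ω + ω ^ 5 + ω ^ 9 = 0 ∧
    ¬ ∃ α β : MonoidAlgebra ℤ G,
        (∀ g : G, 0 ≤ α.coeff g) ∧ (∀ g : G, α.coeff g ≠ 0 → g = 1 ∨ g = z ^ 6) ∧
        (∀ g : G, 0 ≤ β.coeff g) ∧ (∀ g : G, β.coeff g ≠ 0 → g = 1 ∨ g = z ^ 4 ∨ g = z ^ 8) ∧
        MonoidAlgebra.single z 1 + MonoidAlgebra.single (z ^ 5) 1 +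
            MonoidAlgebra.single (z ^ 9) 1 =
          α * (MonoidAlgebra.single (1 : G) (1 : ℤ) + MonoidAlgebra.single (z ^ 4) 1 +
                MonoidAlgebra.single (z ^ 8) 1) +
          β * (MonoidAlgebra.single (1 : G) (1 : ℤ) + MonoidAlgebra.single (z ^ 6) 1) :=
  lam_leung_counterexample_n12_general G z ω hω φ hφ
end

section
/- Let n ≥ 1 and let A be a multiset of nonzero elements of ℤ/nℤ with at most two elements (counted with multiplicity). Then every circulant multigraph Cay(ℤ/nℤ, B), with B a multiset of nonzero elements of ℤ/nℤ, that is isospectral to Cay(ℤ/nℤ, A) is isomorphic to Cay(ℤ/nℤ, A). -/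
/-!
The adjacency matrix of `Cay(ℤ/nℤ, S)` is diagonalised by the Fourier matrix, with eigenvalues
`λ_j = ∑_{s ∈ S} ζ^{sj}` (`ζ = exp(2πi/n)`). So isospectrality says that the multisets
`{λ_j(A)}` and `{λ_j(B)}` agree, and then `∑_j f(λ_j)` agrees for every `f : ℂ → ℂ`; it suffices
to find a unit `u` of `ℤ/nℤ` with `B = uA`, since `x ↦ u⁻¹x` is then an isomorphism.

The eigenvalue of largest modulus is `|S|`, so `|A| = |B|`. For `A = {a}`, `∑_j λ_j^r = n[ra = 0]`,
so `a` and `b` have the same annihilator and are associates. For `A = {a, c}`, a nonzero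
`λ = x + y` with `|x| = |y| = 1` determines `xy = λ / conj λ`, hence the pair `{x, y}`. Summing
`x^k y^l + y^k x^l` over the nonzero eigenvalues, and over the zero ones (where `y = -x`) with the
help of the bound `#{λ_j = 0} < n/2`, shows that `[ka + lc = 0] + [kc + la = 0]` is a spectral
invariant. Hence the relation module `{(k, l) | ka + lc = 0}` of `(a, c)` is that of `(b, d)` or
of `(d, b)`, and a Bézout argument produces `u`. When `#{λ_j = 0} = n/2`, the difference `c - a`
is the element of order two, the nonzero eigenvalues are the `2ζ^{aj}` with `j` even, and the
annihilators of `2a` and `2b` are compared instead.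
-/

/-- Adjacency matrix of the circulant multigraph `Cay(ℤ/nℤ, S)`:
the `(u,v)` entry is the multiplicity of `v - u` in the connection multiset `S`. -/
def circulantAdj (n : ℕ) [NeZero n] (S : Multiset (ZMod n)) :
    Matrix (ZMod n) (ZMod n) ℂ :=
  Matrix.of fun u v => (S.count (v - u) : ℂ)

open Finset Polynomial

local notation "𝕖" => ZMod.stdAddChar

lemma Multiset.sum_map_eq_sum_count_mul {α R : Type*} [Fintype α] [DecidableEq α]
    [NonAssocSemiring R] (S : Multiset α) (f : α → R) :
    (S.map f).sum = ∑ t, (S.count t : R) * f t := by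
  rw [sum_multiset_map_count, sum_subset (subset_univ _) fun t _ ht => by
    rw [Multiset.count_eq_zero.mpr (by simpa using ht), zero_smul]]
  simp only [nsmul_eq_mul]

lemma AddSubgroup.eq_and_eq_or_eq_and_eq_of_forall {G : Type*} [AddGroup G]
    {P Q R S : AddSubgroup G}
    (h : ∀ x, ((x ∈ P ↔ x ∈ R) ∧ (x ∈ Q ↔ x ∈ S)) ∨ ((x ∈ P ↔ x ∈ S) ∧ (x ∈ Q ↔ x ∈ R))) :
    (P = R ∧ Q = S) ∨ (P = S ∧ Q = R) := by
  have hle : ∀ {H K L : AddSubgroup G}, (∀ x, x ∈ H → x ∈ K ∨ x ∈ L) → H ≤ K ∨ H ≤ L :=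
    fun hH => AddSubgroupClass.subset_union.mp hH
  have hP : P ≤ R ∨ P ≤ S := hle fun x => by have := h x; tauto
  have hQ : Q ≤ R ∨ Q ≤ S := hle fun x => by have := h x; tauto
  have hR : R ≤ P ∨ R ≤ Q := hle fun x => by have := h x; tauto
  have hS : S ≤ P ∨ S ≤ Q := hle fun x => by have := h x; tauto
  have key : P = R ∨ Q = S ∨ P = S ∨ Q = R := by
    by_contra! hne
    rcases hP with hP | hP <;> rcases hQ with hQ | hQ <;> rcases hR with hR | hR <;>
      rcases hS with hS | hS <;> order
  rcases key with rfl | rfl | rfl | rfl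
  · exact .inl ⟨rfl, AddSubgroup.ext fun x => by have := h x; tauto⟩
  · exact .inl ⟨AddSubgroup.ext fun x => by have := h x; tauto, rfl⟩
  · exact .inr ⟨rfl, AddSubgroup.ext fun x => by have := h x; tauto⟩
  · exact .inr ⟨AddSubgroup.ext fun x => by have := h x; tauto, rfl⟩

lemma iff_and_iff_or_iff_and_iff_of_ite_add_ite_eq {p q r s : Prop} [Decidable p] [Decidable q]
    [Decidable r] [Decidable s] {m : ℂ} (hm : m ≠ 0)
    (h : (if p then m else 0) + (if q then m else 0) =
      (if r then m else 0) + (if s then m else 0)) :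
    ((p ↔ r) ∧ (q ↔ s)) ∨ ((p ↔ s) ∧ (q ↔ r)) := by
  have hm2 : m + m ≠ 0 := by rw [← two_mul]; exact mul_ne_zero two_ne_zero hm
  split_ifs at h <;> simp_all [eq_comm (a := (0 : ℂ))]

lemma eq_of_ite_sub_eq_ite_sub {p q : Prop} [Decidable p] [Decidable q] {m : ℕ} {s t : ℂ}
    (h : (if p then (m : ℂ) else 0) - s = (if q then (m : ℂ) else 0) - t)
    (hst : ‖s‖ + ‖t‖ < m) : s = t := by
  have hsub : ‖s - t‖ < m := (norm_sub_le s t).trans_lt hst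
  split_ifs at h
  · linear_combination -h
  · rw [show s - t = m by linear_combination -h, Complex.norm_natCast] at hsub
    exact absurd hsub (lt_irrefl _)
  · rw [show s - t = -m by linear_combination -h, norm_neg, Complex.norm_natCast] at hsub
    exact absurd hsub (lt_irrefl _)
  · linear_combination -h

-- If `z = x + y` with `‖x‖ = ‖y‖ = 1`, then `x * y = z / conj z`.
noncomputable def unitPair (z : ℂ) : Multiset ℂ :=
  (X ^ 2 - C z * X + C (z / starRingEnd ℂ z)).roots

lemma unitPair_add {x y : ℂ} (hx : ‖x‖ = 1) (hy : ‖y‖ = 1) (hxy : x + y ≠ 0) :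
    unitPair (x + y) = {x, y} := by
  have hconj : ∀ {w : ℂ}, ‖w‖ = 1 → w * starRingEnd ℂ w = 1 := fun hw => by
    rw [Complex.mul_conj, Complex.normSq_eq_norm_sq, hw, one_pow, Complex.ofReal_one]
  have hprod : (x + y) / starRingEnd ℂ (x + y) = x * y := by
    rw [div_eq_iff ((_root_.map_ne_zero _).mpr hxy), map_add]
    linear_combination -y * hconj hx - x * hconj hy
  rw [unitPair, hprod, show X ^ 2 - C (x + y) * X + C (x * y) = (X - C x) * (X - C y) by
      rw [C_add, C_mul]; ring,
    roots_mul (mul_ne_zero (X_sub_C_ne_zero x) (X_sub_C_ne_zero y)), roots_X_sub_C, roots_X_sub_C]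
  rfl

namespace ZMod

variable {n : ℕ}

lemma dvd_of_natCast_div_mul_eq_zero [NeZero n] {d e : ℕ} (hd : d ∣ n)
    (h : ((n / d : ℕ) : ZMod n) * e = 0) : d ∣ e := by
  obtain ⟨m, rfl⟩ := hd
  have hd0 : 0 < d := Nat.pos_of_ne_zero fun h0 => NeZero.ne (d * m) (by rw [h0, zero_mul])
  have hm : 0 < m := Nat.pos_of_ne_zero fun h0 => NeZero.ne (d * m) (by rw [h0, mul_zero])
  rw [← Nat.cast_mul, natCast_eq_zero_iff, Nat.mul_div_cancel_left m hd0, mul_comm d] at h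
  exact Nat.dvd_of_mul_dvd_mul_left hm h

lemma exists_unit_mul_of_forall_mul_eq_zero_iff [NeZero n] {x y : ZMod n}
    (h : ∀ r : ZMod n, r * x = 0 ↔ r * y = 0) : ∃ u : (ZMod n)ˣ, y = u * x := by
  -- `x = v d` and `y = w e` with `v, w` units and `d, e ∣ n`; equal annihilators force `d = e`.
  obtain ⟨d, hd, v, hv, rfl⟩ := eq_unit_mul_divisor x
  obtain ⟨e, he, w, hw, rfl⟩ := eq_unit_mul_divisor y
  have hde : ∀ r : ZMod n, r * d = 0 ↔ r * e = 0 := fun r => by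
    simpa only [mul_left_comm r, hv.mul_right_eq_zero, hw.mul_right_eq_zero] using h r
  have hself : ∀ {d : ℕ}, d ∣ n → ((n / d : ℕ) : ZMod n) * d = 0 := fun hd => by
    rw [← Nat.cast_mul, Nat.div_mul_cancel hd, natCast_self]
  obtain rfl : d = e := Nat.dvd_antisymm
    (dvd_of_natCast_div_mul_eq_zero hd ((hde _).mp (hself hd)))
    (dvd_of_natCast_div_mul_eq_zero he ((hde _).mpr (hself he)))
  refine ⟨hw.unit * hv.unit⁻¹, ?_⟩
  rw [Units.val_mul, hw.unit_spec, mul_assoc, ← mul_assoc _ v, hv.val_inv_mul, one_mul]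

instance : IsPrincipalIdealRing (ZMod n) :=
  .of_surjective (Int.castRingHom (ZMod n)) intCast_surjective

lemma exists_unit_of_forall_mul_add_mul_eq_zero_iff [NeZero n] {a c b d : ZMod n}
    (h : ∀ k l : ZMod n, k * a + l * c = 0 ↔ k * b + l * d = 0) :
    ∃ u : (ZMod n)ˣ, b = u * a ∧ d = u * c := by
  obtain ⟨g, hg⟩ : ∃ g, Ideal.span {a, c} = Ideal.span {g} :=
    Submodule.IsPrincipal.principal _
  obtain ⟨κ, μ, hκμ⟩ : ∃ κ μ, κ * a + μ * c = g := by
    rw [← Ideal.mem_span_pair, hg]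
    exact Ideal.mem_span_singleton_self g
  have hdvd : ∀ x ∈ ({a, c} : Set (ZMod n)), ∃ x', x' * g = x := fun x hx => by
    rw [← Ideal.mem_span_singleton', ← hg]
    exact Ideal.subset_span hx
  obtain ⟨a', ha'⟩ := hdvd a (by simp)
  obtain ⟨c', hc'⟩ := hdvd c (by simp)
  obtain ⟨u, hu⟩ := exists_unit_mul_of_forall_mul_eq_zero_iff (x := g) (y := κ * b + μ * d)
    fun r => by rw [← hκμ]; simpa only [mul_add, mul_assoc] using h (r * κ) (r * μ)
  have hb := (h (1 - a' * κ) (-(a' * μ))).mp (by linear_combination -ha' - a' * hκμ)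
  have hd := (h (-(c' * κ)) (1 - c' * μ)).mp (by linear_combination -hc' - c' * hκμ)
  exact ⟨u, by linear_combination hb + a' * hu + u * ha',
    by linear_combination hd + c' * hu + u * hc'⟩

lemma eq_of_two_mul_eq_zero [NeZero n] {x y : ZMod n} (hx : 2 * x = 0) (hy : 2 * y = 0)
    (hx0 : x ≠ 0) (hy0 : y ≠ 0) : x = y := by
  have key : ∀ z : ZMod n, 2 * z = 0 → z ≠ 0 → 2 * z.val = n := fun z hz hz0 => by
    have : ((2 * z.val : ℕ) : ZMod n) = 0 := by
      rw [Nat.cast_mul, natCast_zmod_val, Nat.cast_ofNat, hz]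
    obtain ⟨k, hk⟩ := (natCast_eq_zero_iff _ n).mp this
    have := z.val_lt
    have := (val_ne_zero z).mpr hz0
    rcases k with _ | _ | k <;> simp only [mul_add, mul_one, mul_zero] at hk <;> omega
  have hxn := key x hx hx0
  have hyn := key y hy hy0
  exact val_injective n (by omega)

lemma two_mul_eq_zero_iff_eq_zero_or_add_eq_zero [NeZero n] {τ : ZMod n} (hτ : 2 * τ = 0)
    (hτ0 : τ ≠ 0) (y : ZMod n) :
    2 * y = 0 ↔ y = 0 ∨ y + τ = 0 := by
  have hττ : τ + τ = 0 := by rw [← two_mul, hτ]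
  constructor
  · intro hy
    by_cases hy0 : y = 0
    · exact .inl hy0
    · right
      rw [eq_of_two_mul_eq_zero hy hτ hy0 hτ0, hττ]
  · rintro (rfl | hy)
    · exact mul_zero 2
    · linear_combination 2 * hy - hτ

end ZMod

section

variable {n : ℕ} [NeZero n]

lemma sum_stdAddChar_mul (x : ZMod n) :
    ∑ j : ZMod n, 𝕖 (j * x) = if x = 0 then (n : ℂ) else 0 := by
  rw [AddChar.sum_mulShift x (ZMod.isPrimitive_stdAddChar n), ZMod.card, apply_ite Nat.cast,
    Nat.cast_zero]

lemma stdAddChar_mul_pow (x j : ZMod n) (k : ℕ) : 𝕖 (x * j) ^ k = 𝕖 (j * ((k : ZMod n) * x)) := by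
  rw [← AddChar.map_nsmul_eq_pow, nsmul_eq_mul]
  ring_nf

lemma norm_stdAddChar (x : ZMod n) : ‖𝕖 x‖ = 1 := Circle.norm_coe _

lemma stdAddChar_ne_zero (x : ZMod n) : 𝕖 x ≠ 0 :=
  norm_ne_zero_iff.mp (by rw [norm_stdAddChar]; exact one_ne_zero)

lemma sum_pow_mul_pow (x y : ZMod n) (k l : ℕ) :
    ∑ j, 𝕖 (x * j) ^ k * 𝕖 (y * j) ^ l =
      if (k : ZMod n) * x + l * y = 0 then (n : ℂ) else 0 := by
  simp only [stdAddChar_mul_pow, ← AddChar.map_add_eq_mul, ← mul_add, sum_stdAddChar_mul]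

lemma card_filter_stdAddChar_eq_neg_one {τ j₀ : ZMod n} (hj₀ : 𝕖 (τ * j₀) = -1) :
    #{j | 𝕖 (τ * j) = -1} = #{j | 𝕖 (τ * j) = 1} := by
  refine card_equiv (Equiv.subRight j₀) fun j => ?_
  simp only [mem_filter, mem_univ, true_and, Equiv.subRight_apply]
  rw [show τ * j = τ * (j - j₀) + τ * j₀ by ring, AddChar.map_add_eq_mul, hj₀, mul_neg_one,
    neg_inj]

lemma two_mul_card_filter_stdAddChar_eq_neg_one_le (τ : ZMod n) :
    2 * #{j | 𝕖 (τ * j) = -1} ≤ n := by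
  rcases ({j | 𝕖 (τ * j) = -1} : Finset (ZMod n)).eq_empty_or_nonempty with he | ⟨j₀, hj₀⟩
  · simp [he]
  calc 2 * #{j | 𝕖 (τ * j) = -1}
      = #{j | 𝕖 (τ * j) = -1} + #{j | 𝕖 (τ * j) = 1} := by
        rw [two_mul, card_filter_stdAddChar_eq_neg_one (mem_filter.mp hj₀).2]
    _ ≤ #{j | 𝕖 (τ * j) = -1} + #{j | ¬𝕖 (τ * j) = -1} := by
        gcongr
        exact fun hj => by rw [hj]; norm_num
    _ = n := by rw [card_filter_add_card_filter_not, card_univ, ZMod.card]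

lemma two_mul_eq_zero_of_two_mul_card_filter_stdAddChar_eq_neg_one_eq {τ : ZMod n}
    (h : 2 * #{j | 𝕖 (τ * j) = -1} = n) : 2 * τ = 0 ∧ τ ≠ 0 := by
  obtain ⟨j₀, hj₀⟩ : ({j | 𝕖 (τ * j) = -1} : Finset (ZMod n)).Nonempty :=
    nonempty_iff_ne_empty.mpr fun he => NeZero.ne n (by rw [← h, he, card_empty, mul_zero])
  replace hj₀ := (mem_filter.mp hj₀).2
  have hcard : #{j | 𝕖 (τ * j) = -1} + #{j | ¬𝕖 (τ * j) = -1} =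
      #{j | 𝕖 (τ * j) = -1} + #{j | 𝕖 (τ * j) = 1} := by
    rw [card_filter_add_card_filter_not, card_univ, ZMod.card,
      ← card_filter_stdAddChar_eq_neg_one hj₀, ← two_mul, h]
  have hK : ∀ j, 𝕖 (τ * j) ≠ -1 → 𝕖 (τ * j) = 1 := by
    have := eq_of_subset_of_card_le (s := {j | 𝕖 (τ * j) = 1}) (t := {j | ¬𝕖 (τ * j) = -1})
      (fun j => by simp only [mem_filter, mem_univ, true_and]; intro hj; rw [hj]; norm_num)
      (by omega)
    intro j hj
    have hj' : j ∈ ({j | ¬𝕖 (τ * j) = -1} : Finset (ZMod n)) := by simpa using hj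
    simpa [← this] using hj'
  have hτ : 𝕖 τ ^ 2 = 1 := by
    rw [← mul_one τ, sq_eq_one_iff]
    by_cases h1 : 𝕖 (τ * 1) = -1
    · exact .inr h1
    · exact .inl (hK 1 h1)
  refine ⟨ZMod.injective_stdAddChar ?_, fun hτ0 => ?_⟩
  · rw [AddChar.map_zero_eq_one, ← hτ, ← AddChar.map_nsmul_eq_pow, nsmul_eq_mul, Nat.cast_ofNat]
  · rw [hτ0, zero_mul, AddChar.map_zero_eq_one] at hj₀
    norm_num at hj₀

noncomputable def circulantEigenvalue (S : Multiset (ZMod n)) (j : ZMod n) : ℂ :=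
  (S.map fun s => 𝕖 (s * j)).sum

noncomputable def circulantSpectrum (S : Multiset (ZMod n)) : Multiset ℂ :=
  univ.val.map (circulantEigenvalue S)

noncomputable def dftMatrix (n : ℕ) [NeZero n] : Matrix (ZMod n) (ZMod n) ℂ :=
  Matrix.of fun u j => 𝕖 (u * j)

lemma circulantAdj_mul_dftMatrix (S : Multiset (ZMod n)) :
    circulantAdj n S * dftMatrix n = dftMatrix n * Matrix.diagonal (circulantEigenvalue S) := by
  ext u j
  rw [Matrix.mul_diagonal, Matrix.mul_apply]
  simp only [circulantAdj, dftMatrix, Matrix.of_apply, circulantEigenvalue,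
    Multiset.sum_map_eq_sum_count_mul, mul_sum]
  refine Fintype.sum_equiv (Equiv.subRight u) _ _ fun v => ?_
  rw [Equiv.subRight_apply, mul_left_comm, ← AddChar.map_add_eq_mul, ← add_mul, add_sub_cancel]

lemma isUnit_det_dftMatrix : IsUnit (dftMatrix n).det := by
  refine Matrix.isUnit_det_of_right_inverse (B := (n : ℂ)⁻¹ • Matrix.of fun j v => 𝕖 (-(j * v))) ?_
  ext u v
  simp only [Matrix.smul_apply, Matrix.mul_apply, dftMatrix, Matrix.of_apply,
    Matrix.one_apply, smul_eq_mul, mul_left_comm _ (n : ℂ)⁻¹, ← mul_sum,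
    ← AddChar.map_add_eq_mul]
  simp only [show ∀ i, u * i + -(i * v) = i * (u - v) from fun i => by ring, sum_stdAddChar_mul,
    sub_eq_zero]
  split_ifs
  · exact inv_mul_cancel₀ (NeZero.ne _)
  · exact mul_zero _

lemma charpoly_circulantAdj (S : Multiset (ZMod n)) :
    (circulantAdj n S).charpoly = ∏ j, (X - C (circulantEigenvalue S j)) := by
  have hconj : circulantAdj n S =
      dftMatrix n * Matrix.diagonal (circulantEigenvalue S) * (dftMatrix n)⁻¹ := by
    rw [← circulantAdj_mul_dftMatrix, Matrix.mul_nonsing_inv_cancel_right _ _ isUnit_det_dftMatrix]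
  rw [hconj, Matrix.charpoly_mul_comm, ← mul_assoc, Matrix.nonsing_inv_mul _ isUnit_det_dftMatrix,
    one_mul, Matrix.charpoly_diagonal]

lemma roots_charpoly_circulantAdj (S : Multiset (ZMod n)) :
    (circulantAdj n S).charpoly.roots = circulantSpectrum S := by
  rw [charpoly_circulantAdj, circulantSpectrum, ← roots_multiset_prod_X_sub_C (univ.val.map _),
    Multiset.map_map, prod_eq_multiset_prod]
  rfl

variable {A B : Multiset (ZMod n)}

lemma sum_comp_circulantEigenvalue_eq
    (h : circulantSpectrum B = circulantSpectrum A) (f : ℂ → ℂ) :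
    ∑ j, f (circulantEigenvalue B j) = ∑ j, f (circulantEigenvalue A j) := by
  simpa only [circulantSpectrum, Multiset.map_map, ← sum_eq_multiset_sum, Function.comp_apply]
    using congrArg (fun s => (s.map f).sum) h

lemma sum_filter_ne_zero_comp_circulantEigenvalue_eq
    (h : circulantSpectrum B = circulantSpectrum A) (f : ℂ → ℂ) :
    ∑ j with circulantEigenvalue B j ≠ 0, f (circulantEigenvalue B j) =
      ∑ j with circulantEigenvalue A j ≠ 0, f (circulantEigenvalue A j) := by
  simpa only [sum_filter] using sum_comp_circulantEigenvalue_eq h fun z => if z ≠ 0 then f z else 0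

lemma card_filter_circulantEigenvalue_eq_zero
    (h : circulantSpectrum B = circulantSpectrum A) :
    #{j | circulantEigenvalue B j = 0} = #{j | circulantEigenvalue A j = 0} := by
  have := sum_comp_circulantEigenvalue_eq h fun z => if z = 0 then (1 : ℂ) else 0
  simp only [sum_boole] at this
  exact_mod_cast this

lemma circulantEigenvalue_zero (S : Multiset (ZMod n)) :
    circulantEigenvalue S 0 = Multiset.card S := by
  simp [circulantEigenvalue]

lemma norm_circulantEigenvalue_le (S : Multiset (ZMod n)) (j : ZMod n) :
    ‖circulantEigenvalue S j‖ ≤ Multiset.card S :=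
  (norm_multiset_sum_le _).trans (by simp [Multiset.map_map])

lemma card_le_of_circulantSpectrum_eq
    (h : circulantSpectrum B = circulantSpectrum A) : Multiset.card A ≤ Multiset.card B := by
  have hmem : (Multiset.card A : ℂ) ∈ circulantSpectrum B := by
    rw [h, ← circulantEigenvalue_zero]
    exact Multiset.mem_map_of_mem _ (mem_univ_val 0)
  obtain ⟨j, -, hj⟩ := Multiset.mem_map.mp hmem
  exact_mod_cast hj ▸ norm_circulantEigenvalue_le B j

lemma circulantAdj_map_mul_left (u : (ZMod n)ˣ) (S : Multiset (ZMod n)) :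
    circulantAdj n (S.map (u * ·)) = (circulantAdj n S).submatrix u⁻¹.mulLeft u⁻¹.mulLeft := by
  ext p q
  simp only [circulantAdj, Matrix.submatrix_apply, Matrix.of_apply, Units.mulLeft_apply, ← mul_sub]
  conv_lhs => rw [← Units.mul_inv_cancel_left u (q - p)]
  rw [Multiset.count_map_eq_count' _ S u.isUnit.mul_right_injective]

lemma circulantEigenvalue_pair (a c j : ZMod n) :
    circulantEigenvalue {a, c} j = 𝕖 (a * j) + 𝕖 (c * j) := by
  simp [circulantEigenvalue]

lemma circulantEigenvalue_pair_eq_zero_iff_eq_neg (a c j : ZMod n) :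
    circulantEigenvalue {a, c} j = 0 ↔ 𝕖 (c * j) = -𝕖 (a * j) := by
  rw [circulantEigenvalue_pair, add_eq_zero_iff_eq_neg']

lemma circulantEigenvalue_pair_eq_zero_iff (a c j : ZMod n) :
    circulantEigenvalue {a, c} j = 0 ↔ 𝕖 ((c - a) * j) = -1 := by
  rw [circulantEigenvalue_pair, show c * j = a * j + (c - a) * j by ring, AddChar.map_add_eq_mul,
    ← mul_one_add, mul_eq_zero, or_iff_right (stdAddChar_ne_zero _), add_eq_zero_iff_neg_eq,
    eq_comm]

lemma sum_filter_ne_zero_half_pow_of_two_mul_eq_zero {τ : ZMod n} (hτ : 2 * τ = 0) (x : ZMod n)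
    (r : ℕ) :
    ∑ j with circulantEigenvalue {x, x + τ} j ≠ 0, (circulantEigenvalue {x, x + τ} j / 2) ^ r =
      ((if (r : ZMod n) * x = 0 then (n : ℂ) else 0) +
        (if (r : ZMod n) * x + τ = 0 then (n : ℂ) else 0)) / 2 := by
  have hpt : ∀ j, (if circulantEigenvalue {x, x + τ} j ≠ 0 then
      (circulantEigenvalue {x, x + τ} j / 2) ^ r else 0) =
      (𝕖 (j * ((r : ZMod n) * x)) + 𝕖 (j * ((r : ZMod n) * x + τ))) / 2 := fun j => by
    have hev : circulantEigenvalue {x, x + τ} j = 𝕖 (x * j) * (1 + 𝕖 (τ * j)) := by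
      rw [circulantEigenvalue_pair, add_mul, AddChar.map_add_eq_mul]
      ring
    have hshift : 𝕖 (j * ((r : ZMod n) * x + τ)) = 𝕖 (j * ((r : ZMod n) * x)) * 𝕖 (τ * j) := by
      rw [← AddChar.map_add_eq_mul]
      ring_nf
    have hsq : 𝕖 (τ * j) ^ 2 = 1 := by
      rw [← AddChar.map_nsmul_eq_pow, nsmul_eq_mul, Nat.cast_ofNat, ← mul_assoc, hτ, zero_mul,
        AddChar.map_zero_eq_one]
    rw [hshift, ← stdAddChar_mul_pow]
    rcases sq_eq_one_iff.mp hsq with h1 | h1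
    · rw [if_pos (by rw [hev, h1]; exact mul_ne_zero (stdAddChar_ne_zero _) (by norm_num)), hev, h1]
      ring
    · rw [if_neg (by rw [hev, h1, add_neg_cancel, mul_zero, ne_eq, not_not]), h1]
      ring
  rw [sum_filter, sum_congr rfl fun j _ => hpt j, ← sum_div, sum_add_distrib, sum_stdAddChar_mul,
    sum_stdAddChar_mul]

lemma exists_unit_of_circulantSpectrum_eq_of_two_mul_eq_zero {τ a b : ZMod n} (hτ : 2 * τ = 0)
    (hτ0 : τ ≠ 0) (h : circulantSpectrum {b, b + τ} = circulantSpectrum {a, a + τ}) :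
    ∃ u : (ZMod n)ˣ, {b, b + τ} = ({a, a + τ} : Multiset (ZMod n)).map ((u : ZMod n) * ·) := by
  have hann : ∀ r : ZMod n, r * (2 * a) = 0 ↔ r * (2 * b) = 0 := fun r => by
    have hr := sum_filter_ne_zero_comp_circulantEigenvalue_eq h fun z => (z / 2) ^ r.val
    simp only [sum_filter_ne_zero_half_pow_of_two_mul_eq_zero hτ, ZMod.natCast_zmod_val,
      div_left_inj' (two_ne_zero' ℂ)] at hr
    have := iff_and_iff_or_iff_and_iff_of_ite_add_ite_eq (Nat.cast_ne_zero.mpr (NeZero.ne n)) hr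
    rw [mul_left_comm, mul_left_comm r, ZMod.two_mul_eq_zero_iff_eq_zero_or_add_eq_zero hτ hτ0,
      ZMod.two_mul_eq_zero_iff_eq_zero_or_add_eq_zero hτ hτ0]
    tauto
  obtain ⟨u, hu⟩ := ZMod.exists_unit_mul_of_forall_mul_eq_zero_iff hann
  have huτ : (u : ZMod n) * τ = τ :=
    ZMod.eq_of_two_mul_eq_zero (by rw [mul_left_comm, hτ, mul_zero]) hτ
      ((Units.mul_right_eq_zero u).not.mpr hτ0) hτ0
  refine ⟨u, ?_⟩
  simp only [Multiset.insert_eq_cons, Multiset.map_cons, Multiset.map_singleton, mul_add, huτ]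
  rcases (ZMod.two_mul_eq_zero_iff_eq_zero_or_add_eq_zero hτ hτ0 (b - u * a)).mp
    (by linear_combination hu) with hb | hb
  · rw [show b = u * a by linear_combination hb]
  · rw [show b = u * a + τ by linear_combination hb - hτ, add_assoc, ← two_mul, hτ, add_zero]
    exact Multiset.pair_comm _ _

lemma sum_filter_ne_zero_pair_eq {a c b d : ZMod n}
    (h : circulantSpectrum {b, d} = circulantSpectrum {a, c}) (g : Multiset ℂ → ℂ) :
    ∑ j with circulantEigenvalue {b, d} j ≠ 0, g {𝕖 (b * j), 𝕖 (d * j)} =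
      ∑ j with circulantEigenvalue {a, c} j ≠ 0, g {𝕖 (a * j), 𝕖 (c * j)} := by
  have hrec : ∀ x y : ZMod n, ∑ j with circulantEigenvalue {x, y} j ≠ 0,
      g (unitPair (circulantEigenvalue {x, y} j)) =
      ∑ j with circulantEigenvalue {x, y} j ≠ 0, g {𝕖 (x * j), 𝕖 (y * j)} := fun x y =>
    sum_congr rfl fun j hj => by
      rw [mem_filter, circulantEigenvalue_pair] at hj
      rw [circulantEigenvalue_pair, unitPair_add (norm_stdAddChar _) (norm_stdAddChar _) hj.2]
  rw [← hrec, ← hrec]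
  exact sum_filter_ne_zero_comp_circulantEigenvalue_eq h (g ∘ unitPair)

lemma sum_filter_eq_zero_mul_pow_eq {a c b d : ZMod n}
    (h : circulantSpectrum {b, d} = circulantSpectrum {a, c})
    (hlt : 2 * #{j | circulantEigenvalue {a, c} j = 0} < n) (σ : ℕ) :
    ∑ j with circulantEigenvalue {b, d} j = 0, (𝕖 (b * j) * 𝕖 (d * j)) ^ σ =
      ∑ j with circulantEigenvalue {a, c} j = 0, (𝕖 (a * j) * 𝕖 (c * j)) ^ σ := by
  -- Over all `j` the sum is `n` or `0`, over the nonzero eigenvalues it is spectral, and over the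
  -- fewer than `n / 2` zero eigenvalues it has modulus less than `n / 2`.
  have hsplit : ∀ x y : ZMod n,
      (if (σ : ZMod n) * x + σ * y = 0 then (n : ℂ) else 0) -
        ∑ j with circulantEigenvalue {x, y} j = 0, (𝕖 (x * j) * 𝕖 (y * j)) ^ σ =
      ∑ j with circulantEigenvalue {x, y} j ≠ 0, ({𝕖 (x * j), 𝕖 (y * j)} : Multiset ℂ).prod ^ σ :=
    fun x y => by
      simp only [← sum_pow_mul_pow, ← mul_pow, Multiset.prod_pair]
      rw [← sum_filter_add_sum_filter_not univ fun j => circulantEigenvalue {x, y} j = 0,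
        add_sub_cancel_left]
  have hnorm : ∀ x y : ZMod n,
      ‖∑ j with circulantEigenvalue {x, y} j = 0, (𝕖 (x * j) * 𝕖 (y * j)) ^ σ‖ ≤
        #{j | circulantEigenvalue {x, y} j = 0} := fun x y =>
    (norm_sum_le _ _).trans (by simp)
  refine eq_of_ite_sub_eq_ite_sub
    ((hsplit b d).trans ((sum_filter_ne_zero_pair_eq h fun m => m.prod ^ σ).trans
      (hsplit a c).symm)) ?_
  have hb := hnorm b d
  rw [card_filter_circulantEigenvalue_eq_zero h] at hb
  have hlt' : 2 * (#{j | circulantEigenvalue {a, c} j = 0} : ℝ) < n := by exact_mod_cast hlt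
  linarith [hnorm a c]

lemma sum_filter_eq_zero_pow_mul_pow_eq {a c b d : ZMod n}
    (h : circulantSpectrum {b, d} = circulantSpectrum {a, c})
    (hlt : 2 * #{j | circulantEigenvalue {a, c} j = 0} < n) (k l : ℕ) :
    ∑ j with circulantEigenvalue {b, d} j = 0,
        (𝕖 (b * j) ^ k * 𝕖 (d * j) ^ l + 𝕖 (d * j) ^ k * 𝕖 (b * j) ^ l) =
      ∑ j with circulantEigenvalue {a, c} j = 0,
        (𝕖 (a * j) ^ k * 𝕖 (c * j) ^ l + 𝕖 (c * j) ^ k * 𝕖 (a * j) ^ l) := by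
  have hzero : ∀ x y : ZMod n, ∀ j ∈ ({j | circulantEigenvalue {x, y} j = 0} : Finset (ZMod n)),
      𝕖 (y * j) = -𝕖 (x * j) := fun x y j hj =>
    (circulantEigenvalue_pair_eq_zero_iff_eq_neg x y j).mp (mem_filter.mp hj).2
  have hsum : ∀ x y : ZMod n, ∑ j with circulantEigenvalue {x, y} j = 0,
      (𝕖 (x * j) ^ k * 𝕖 (y * j) ^ l + 𝕖 (y * j) ^ k * 𝕖 (x * j) ^ l) =
        ((-1) ^ k + (-1) ^ l) * ∑ j with circulantEigenvalue {x, y} j = 0, 𝕖 (x * j) ^ (k + l) :=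
    fun x y => by
      rw [mul_sum]
      refine sum_congr rfl fun j hj => ?_
      rw [hzero x y j hj, neg_pow, neg_pow, pow_add]
      ring
  rw [hsum, hsum]
  rcases Nat.even_or_odd' (k + l) with ⟨σ, hσ | hσ⟩
  · have hpow : ∀ x y : ZMod n, ∑ j with circulantEigenvalue {x, y} j = 0, 𝕖 (x * j) ^ (k + l) =
        (-1) ^ σ * ∑ j with circulantEigenvalue {x, y} j = 0, (𝕖 (x * j) * 𝕖 (y * j)) ^ σ :=
      fun x y => by
        rw [mul_sum]
        refine sum_congr rfl fun j hj => ?_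
        rw [hzero x y j hj, mul_neg, ← sq, neg_eq_neg_one_mul (_ ^ 2), mul_pow, ← mul_assoc,
          ← mul_pow, neg_one_mul, neg_neg, one_pow, one_mul, ← pow_mul, hσ]
    rw [hpow, hpow, sum_filter_eq_zero_mul_pow_eq h hlt]
  · have hodd : (-1 : ℂ) ^ k * (-1) ^ l = -1 := by
      rw [← pow_add, hσ, pow_succ, pow_mul]
      norm_num
    have hk : ((-1 : ℂ) ^ k) ^ 2 = 1 := by rw [← pow_mul, mul_comm, pow_mul]; norm_num
    rw [show (-1 : ℂ) ^ k + (-1) ^ l = 0 by linear_combination (-1) ^ k * hodd - (-1) ^ l * hk,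
      zero_mul, zero_mul]

lemma ite_add_ite_eq_of_two_mul_card_lt {a c b d : ZMod n}
    (h : circulantSpectrum {b, d} = circulantSpectrum {a, c})
    (hlt : 2 * #{j | circulantEigenvalue {a, c} j = 0} < n) (k l : ℕ) :
    (if (k : ZMod n) * b + l * d = 0 then (n : ℂ) else 0) +
        (if (k : ZMod n) * d + l * b = 0 then (n : ℂ) else 0) =
      (if (k : ZMod n) * a + l * c = 0 then (n : ℂ) else 0) +
        (if (k : ZMod n) * c + l * a = 0 then (n : ℂ) else 0) := by
  have hfull : ∀ x y : ZMod n,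
      ∑ j, (𝕖 (x * j) ^ k * 𝕖 (y * j) ^ l + 𝕖 (y * j) ^ k * 𝕖 (x * j) ^ l) =
        (if (k : ZMod n) * x + l * y = 0 then (n : ℂ) else 0) +
          (if (k : ZMod n) * y + l * x = 0 then (n : ℂ) else 0) := fun x y => by
    rw [sum_add_distrib, sum_pow_mul_pow, sum_pow_mul_pow]
  have hsymm : ∀ x y : ℂ, (({x, y} : Multiset ℂ).map (· ^ k)).sum *
      (({x, y} : Multiset ℂ).map (· ^ l)).sum - (({x, y} : Multiset ℂ).map (· ^ (k + l))).sum =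
      x ^ k * y ^ l + y ^ k * x ^ l := fun x y => by
    simp only [Multiset.insert_eq_cons, Multiset.map_cons, Multiset.map_singleton,
      Multiset.sum_cons, Multiset.sum_singleton]
    ring
  rw [← hfull, ← hfull,
    ← sum_filter_add_sum_filter_not univ fun j => circulantEigenvalue {b, d} j = 0,
    ← sum_filter_add_sum_filter_not univ fun j => circulantEigenvalue {a, c} j = 0,
    sum_filter_eq_zero_pow_mul_pow_eq h hlt]
  congr 1
  simpa only [hsymm] using sum_filter_ne_zero_pair_eq h fun m =>
    (m.map (· ^ k)).sum * (m.map (· ^ l)).sum - (m.map (· ^ (k + l))).sum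

lemma exists_unit_of_circulantSpectrum_pair_eq_of_two_mul_card_lt {a c b d : ZMod n}
    (h : circulantSpectrum {b, d} = circulantSpectrum {a, c})
    (hlt : 2 * #{j | circulantEigenvalue {a, c} j = 0} < n) :
    ∃ u : (ZMod n)ˣ, {b, d} = ({a, c} : Multiset (ZMod n)).map ((u : ZMod n) * ·) := by
  let rel : ZMod n → ZMod n → AddSubgroup (ZMod n × ZMod n) := fun x y =>
    ((AddMonoidHom.mulRight x).coprod (AddMonoidHom.mulRight y)).ker
  have hrel : ∀ x y : ZMod n, ∀ p, p ∈ rel x y ↔ p.1 * x + p.2 * y = 0 := fun _ _ _ => Iff.rfl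
  have hswap := AddSubgroup.eq_and_eq_or_eq_and_eq_of_forall (P := rel a c) (Q := rel c a)
    (R := rel b d) (S := rel d b) fun p => by
      have := iff_and_iff_or_iff_and_iff_of_ite_add_ite_eq (Nat.cast_ne_zero.mpr (NeZero.ne n))
        (ite_add_ite_eq_of_two_mul_card_lt h hlt p.1.val p.2.val).symm
      simpa only [hrel, ZMod.natCast_zmod_val] using this
  simp only [Multiset.insert_eq_cons, Multiset.map_cons, Multiset.map_singleton]
  rcases hswap with ⟨hP, -⟩ | ⟨hP, -⟩
  · obtain ⟨u, hb, hd⟩ := ZMod.exists_unit_of_forall_mul_add_mul_eq_zero_iff fun k l => by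
      simpa only [hrel] using SetLike.ext_iff.mp hP (k, l)
    exact ⟨u, by rw [hb, hd]⟩
  · obtain ⟨u, hd, hb⟩ := ZMod.exists_unit_of_forall_mul_add_mul_eq_zero_iff fun k l => by
      simpa only [hrel] using SetLike.ext_iff.mp hP (k, l)
    exact ⟨u, by rw [hb, hd]; exact Multiset.pair_comm _ _⟩

lemma exists_unit_of_circulantSpectrum_pair_eq {a c b d : ZMod n}
    (h : circulantSpectrum {b, d} = circulantSpectrum {a, c}) :
    ∃ u : (ZMod n)ˣ, {b, d} = ({a, c} : Multiset (ZMod n)).map ((u : ZMod n) * ·) := by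
  obtain ⟨τ, rfl⟩ : ∃ τ, c = a + τ := ⟨c - a, by ring⟩
  obtain ⟨τ', rfl⟩ : ∃ τ', d = b + τ' := ⟨d - b, by ring⟩
  have hzeros : ∀ x t : ZMod n,
      #{j | circulantEigenvalue {x, x + t} j = 0} = #{j | 𝕖 (t * j) = -1} := fun x t => by
    simp_rw [circulantEigenvalue_pair_eq_zero_iff, add_sub_cancel_left]
  have hcard := card_filter_circulantEigenvalue_eq_zero h
  rw [hzeros, hzeros] at hcard
  rcases (two_mul_card_filter_stdAddChar_eq_neg_one_le τ).lt_or_eq with hlt | heq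
  · exact exists_unit_of_circulantSpectrum_pair_eq_of_two_mul_card_lt h (by rwa [hzeros])
  · obtain ⟨hτ, hτ0⟩ := two_mul_eq_zero_of_two_mul_card_filter_stdAddChar_eq_neg_one_eq heq
    obtain ⟨hτ', hτ0'⟩ :=
      two_mul_eq_zero_of_two_mul_card_filter_stdAddChar_eq_neg_one_eq (hcard ▸ heq)
    obtain rfl := ZMod.eq_of_two_mul_eq_zero hτ' hτ hτ0' hτ0
    exact exists_unit_of_circulantSpectrum_eq_of_two_mul_eq_zero hτ hτ0 h

lemma exists_unit_of_circulantSpectrum_singleton_eq {a b : ZMod n}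
    (h : circulantSpectrum {b} = circulantSpectrum {a}) : ∃ u : (ZMod n)ˣ, b = u * a := by
  refine ZMod.exists_unit_mul_of_forall_mul_eq_zero_iff fun r => ?_
  have hr := sum_comp_circulantEigenvalue_eq h (· ^ r.val)
  simp only [circulantEigenvalue, Multiset.map_singleton, Multiset.sum_singleton,
    stdAddChar_mul_pow, sum_stdAddChar_mul, ZMod.natCast_zmod_val] at hr
  have hn : (n : ℂ) ≠ 0 := Nat.cast_ne_zero.mpr (NeZero.ne n)
  split_ifs at hr <;> simp_all

lemma exists_unit_of_circulantSpectrum_eq (hA : Multiset.card A ≤ 2)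
    (h : circulantSpectrum B = circulantSpectrum A) :
    ∃ u : (ZMod n)ˣ, B = A.map ((u : ZMod n) * ·) := by
  have hcard : Multiset.card B = Multiset.card A :=
    le_antisymm (card_le_of_circulantSpectrum_eq h.symm) (card_le_of_circulantSpectrum_eq h)
  interval_cases hA' : Multiset.card A
  · rw [Multiset.card_eq_zero.mp hA', Multiset.card_eq_zero.mp hcard]
    exact ⟨1, rfl⟩
  · obtain ⟨a, rfl⟩ := Multiset.card_eq_one.mp hA'
    obtain ⟨b, rfl⟩ := Multiset.card_eq_one.mp hcard
    obtain ⟨u, rfl⟩ := exists_unit_of_circulantSpectrum_singleton_eq h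
    exact ⟨u, rfl⟩
  · obtain ⟨a, c, rfl⟩ := Multiset.card_eq_two.mp hA'
    obtain ⟨b, d, rfl⟩ := Multiset.card_eq_two.mp hcard
    exact exists_unit_of_circulantSpectrum_pair_eq h

end

theorem isospectral_implies_isomorphic_of_card_le_two_general
    (n : ℕ) [NeZero n] (A : Multiset (ZMod n))
    (hA : Multiset.card A ≤ 2) :
    ∀ B : Multiset (ZMod n), (0 : ZMod n) ∉ B →
      (circulantAdj n B).charpoly = (circulantAdj n A).charpoly →
      ∃ e : Equiv.Perm (ZMod n),
        circulantAdj n B = (circulantAdj n A).submatrix e e := by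
  intro B _ hchar
  have hspec : circulantSpectrum B = circulantSpectrum A := by
    rw [← roots_charpoly_circulantAdj, hchar, roots_charpoly_circulantAdj]
  obtain ⟨u, rfl⟩ := exists_unit_of_circulantSpectrum_eq hA hspec
  exact ⟨_, circulantAdj_map_mul_left u A⟩

/-- Circulant multigraphs whose connection multiset has at most two elements
(counted with multiplicity) are characterized by their spectra: any circulant
multigraph `Cay(ℤ/nℤ, B)` isospectral to `Cay(ℤ/nℤ, A)` with
`|A| ≤ 2` is isomorphic to it. -/
theorem isospectral_implies_isomorphic_of_card_le_two
    (n : ℕ) [NeZero n] (A : Multiset (ZMod n)) (hA0 : (0 : ZMod n) ∉ A)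
    (hA : Multiset.card A ≤ 2) :
    ∀ B : Multiset (ZMod n), (0 : ZMod n) ∉ B →
      (circulantAdj n B).charpoly = (circulantAdj n A).charpoly →
      ∃ e : Equiv.Perm (ZMod n),
        circulantAdj n B = (circulantAdj n A).submatrix e e :=
  isospectral_implies_isomorphic_of_card_le_two_general n A hA
end

section
/- Let p be an odd prime, let r ≥ 2 be an integer, let n = 2^r·p, and let ω ∈ ℂ be a primitive n-th root of unity. For x ∈ ℤ, set λ_x = Σ_{i=0}^{(p−1)/2} ω^{x(1 + i·2^r)} + Σ_{j=1}^{(p−1)/2} ω^{x(1 + j·2^r + n/2)} and μ_x = Σ_{i=0}^{(p−1)/2} ω^{x(1 − i·2^r)} + Σ_{j=1}^{(p−1)/2} ω^{x(1 − j·2^r + n/2)}. Then λ_x = μ_{x + n/2} if gcd(x, n) = 2^m for some integer m > 0, and λ_x = μ_x otherwise. In particular, the multisets {λ_x : x ∈ ℤ/nℤ} and {μ_x : x ∈ ℤ/nℤ} are equal. -/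
/-- `λ_x = Σ_{i=0}^{(p−1)/2} ω^{x(1 + i·2^r)} + Σ_{j=1}^{(p−1)/2} ω^{x(1 + j·2^r + n/2)}`. -/
noncomputable def lamEig (p r n : ℕ) (ω : ℂ) (x : ℤ) : ℂ :=
  (∑ i ∈ Finset.range ((p - 1) / 2 + 1), ω ^ (x * (1 + (i : ℤ) * 2 ^ r))) +
  ∑ j ∈ Finset.Icc 1 ((p - 1) / 2), ω ^ (x * (1 + (j : ℤ) * 2 ^ r + ((n / 2 : ℕ) : ℤ)))

/-- `μ_x = Σ_{i=0}^{(p−1)/2} ω^{x(1 − i·2^r)} + Σ_{j=1}^{(p−1)/2} ω^{x(1 − j·2^r + n/2)}`. -/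
noncomputable def muEig (p r n : ℕ) (ω : ℂ) (x : ℤ) : ℂ :=
  (∑ i ∈ Finset.range ((p - 1) / 2 + 1), ω ^ (x * (1 - (i : ℤ) * 2 ^ r))) +
  ∑ j ∈ Finset.Icc 1 ((p - 1) / 2), ω ^ (x * (1 - (j : ℤ) * 2 ^ r + ((n / 2 : ℕ) : ℤ)))

/-!
Put `ζ = ω ^ 2 ^ r`, a primitive `p`-th root of unity, `k = (p - 1) / 2` and
`G(u) = 1 + u + ⋯ + u ^ k`. Since `ω ^ (n / 2) = -1`, both eigenvalues collapse to
`λ_x = ω^x (G(ζ^x) + (-1)^x (G(ζ^x) - 1))` and `μ_x = ω^x (G(ζ^-x) + (-1)^x (G(ζ^-x) - 1))`.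
If `p ∣ x` then `ζ^x = 1`, and if `x` is odd both equal `ω^x`. In the remaining case,
`gcd(x, n) = 2^m` with `m > 0`, `ζ^x` is a nontrivial `p`-th root of unity, so
`G(ζ^x) + G(ζ^-x) = 1`; shifting `x` by `n / 2` negates `ω^x` and fixes `ζ^x` and `(-1)^x`,
which turns `μ` into `λ`. The shift by `n / 2` preserves that case, so shifting there and fixing
everything else is an involution of `ℤ/nℤ` carrying the `λ`-spectrum onto the `μ`-spectrum.
-/

open Finset

section GeomSum

variable {K : Type*} [Field K]

theorem geom_sum_add_geom_sum_inv_eq_one {u : K} {k : ℕ} (hu1 : u ≠ 1)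
    (hu : u ^ (2 * k + 1) = 1) :
    ∑ i ∈ range (k + 1), u ^ i + ∑ i ∈ range (k + 1), u⁻¹ ^ i = 1 := by
  have hu0 : u ≠ 0 := by rintro rfl; simp at hu
  set s := ∑ i ∈ range (k + 1), u ^ i
  set t := ∑ i ∈ range (k + 1), u⁻¹ ^ i
  have hs : s * (u - 1) = u ^ (k + 1) - 1 := geom_sum_mul u (k + 1)
  have ht : t * u ^ k = s := by
    rw [sum_mul, ← sum_range_reflect]
    refine sum_congr rfl fun i hi => ?_
    have hik : i ≤ k := Nat.lt_succ_iff.mp (mem_range.mp hi)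
    rw [inv_pow, inv_mul_eq_iff_eq_mul₀ (pow_ne_zero _ hu0), ← pow_add]
    congr 1
    omega
  -- `u ^ k * (s + t - 1) = ∑ i ∈ range (2 * k + 1), u ^ i`, which `u - 1` kills
  have key : (u - 1) * u ^ k * (s + t - 1) = 0 := by
    linear_combination (u ^ k + 1) * hs + (u - 1) * ht + hu
  rcases mul_eq_zero.mp key with h | h
  · exact absurd h (mul_ne_zero (sub_ne_zero.mpr hu1) (pow_ne_zero _ hu0))
  · linear_combination h

theorem sum_zpow_add_sum_zpow_eq_geom_sum {ω : K} {N : ℤ} (hω0 : ω ≠ 0) (hN : ω ^ N = -1)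
    (x a : ℤ) (k : ℕ) :
    ∑ i ∈ range (k + 1), ω ^ (x * (1 + i * a)) + ∑ j ∈ Icc 1 k, ω ^ (x * (1 + j * a + N)) =
      ω ^ x * (∑ i ∈ range (k + 1), (ω ^ (x * a)) ^ i +
        (-1) ^ x * (∑ i ∈ range (k + 1), (ω ^ (x * a)) ^ i - 1)) := by
  have hfirst (i : ℕ) : ω ^ (x * (1 + i * a)) = ω ^ x * (ω ^ (x * a)) ^ i := by
    rw [← zpow_natCast, ← zpow_mul, ← zpow_add₀ hω0]
    ring_nf
  have hsecond (j : ℕ) :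
      ω ^ (x * (1 + j * a + N)) = ω ^ x * (ω ^ (x * a)) ^ j * (-1) ^ x := by
    rw [← hN, ← zpow_natCast, ← zpow_mul, ← zpow_mul, ← zpow_add₀ hω0, ← zpow_add₀ hω0]
    ring_nf
  have hsplit : range (k + 1) = insert 0 (Icc 1 k) := by
    ext i
    simp only [mem_range, mem_insert, mem_Icc]
    omega
  simp only [hfirst, hsecond, ← sum_mul, ← mul_sum, hsplit, sum_insert (by simp : 0 ∉ Icc 1 k),
    pow_zero]
  ring

end GeomSum

lemma zpow_emod_mul {G₀ : Type*} [GroupWithZero G₀] {ω : G₀} {n : ℕ} (hω0 : ω ≠ 0)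
    (hω : ω ^ n = 1) (x c : ℤ) : ω ^ (x % n * c) = ω ^ (x * c) := by
  conv_rhs => rw [← Int.emod_add_mul_ediv x n]
  rw [add_mul, zpow_add₀ hω0, mul_assoc, zpow_mul ω n, zpow_natCast, hω, one_zpow, mul_one]

lemma IsPrimitiveRoot.pow_div_two_eq_neg_one {K : Type*} [CommRing K] [IsDomain K] {ω : K}
    {n : ℕ} (hω : IsPrimitiveRoot ω n) (hn : 2 ∣ n) (hn0 : 0 < n) : ω ^ (n / 2) = -1 :=
  (hω.pow hn0 (Nat.div_mul_cancel hn).symm).eq_neg_one_of_two_right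

lemma Int.natCast_dvd_iff_dvd_gcd {k n : ℕ} {x : ℤ} (hk : k ∣ n) :
    (k : ℤ) ∣ x ↔ k ∣ Int.gcd x n :=
  ⟨fun h => Int.natCast_dvd_natCast.mp (Int.dvd_coe_gcd h (Int.natCast_dvd_natCast.mpr hk)),
    fun h => (Int.natCast_dvd_natCast.mpr h).trans (Int.gcd_dvd_left x n)⟩

lemma Nat.dvd_add_mod_iff {d c m x : ℕ} (hc : d ∣ c) (hm : d ∣ m) :
    d ∣ (x + c) % m ↔ d ∣ x :=
  (Nat.dvd_mod_iff hm).trans (Nat.dvd_add_left hc)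

theorem Multiset.map_range_eq_map_of_involution {β : Type*} {f g : ℕ → β} {n : ℕ}
    (σ : ℕ → ℕ) (hσ : ∀ x < n, σ x < n) (hσσ : ∀ x < n, σ (σ x) = x)
    (h : ∀ x < n, f x = g (σ x)) : (range n).map f = (range n).map g := by
  refine map_eq_map_of_bij_of_nodup f g (nodup_range n) (nodup_range n) (fun x _ => σ x)
    (fun x hx => mem_range.mpr (hσ x (mem_range.mp hx))) (fun x hx y hy hxy => ?_)
    (fun y hy => ⟨σ y, mem_range.mpr (hσ y (mem_range.mp hy)), hσσ y (mem_range.mp hy)⟩)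
    (fun x hx => h x (mem_range.mp hx))
  rw [← hσσ x (mem_range.mp hx), ← hσσ y (mem_range.mp hy), hxy]

section Eigenvalues

variable {p r n : ℕ} {ω : ℂ}

lemma pos_of_eq_two_pow_mul (hn : n = 2 ^ r * p) (hp : 0 < p) : 0 < n :=
  hn ▸ Nat.mul_pos (by positivity) hp

lemma two_dvd_of_eq_two_pow_mul (hn : n = 2 ^ r * p) (hr : r ≠ 0) : 2 ∣ n :=
  hn ▸ dvd_mul_of_dvd_left (dvd_pow_self 2 hr) p

lemma div_two_eq_of_eq_two_pow_mul (hn : n = 2 ^ r * p) (hr : 1 ≤ r) :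
    n / 2 = 2 ^ (r - 1) * p := by
  subst hn
  obtain ⟨s, rfl⟩ := Nat.exists_eq_add_of_le' hr
  simp [pow_succ, mul_right_comm _ 2 p]

lemma zpow_mul_two_pow (x : ℤ) : ω ^ (x * 2 ^ r) = (ω ^ 2 ^ r) ^ x := by
  rw [mul_comm, zpow_mul]
  norm_cast

theorem lamEig_eq (hω0 : ω ≠ 0) (hN : ω ^ (n / 2) = -1) (x : ℤ) :
    lamEig p r n ω x = ω ^ x * (∑ i ∈ range ((p - 1) / 2 + 1), ((ω ^ 2 ^ r) ^ x) ^ i +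
      (-1) ^ x * (∑ i ∈ range ((p - 1) / 2 + 1), ((ω ^ 2 ^ r) ^ x) ^ i - 1)) := by
  rw [← zpow_mul_two_pow]
  exact sum_zpow_add_sum_zpow_eq_geom_sum hω0 (by rwa [zpow_natCast]) x _ _

theorem muEig_eq (hω0 : ω ≠ 0) (hN : ω ^ (n / 2) = -1) (x : ℤ) :
    muEig p r n ω x = ω ^ x * (∑ i ∈ range ((p - 1) / 2 + 1), ((ω ^ 2 ^ r) ^ x)⁻¹ ^ i +
      (-1) ^ x * (∑ i ∈ range ((p - 1) / 2 + 1), ((ω ^ 2 ^ r) ^ x)⁻¹ ^ i - 1)) := by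
  rw [← zpow_mul_two_pow, ← zpow_neg, ← mul_neg,
    ← sum_zpow_add_sum_zpow_eq_geom_sum hω0 (by rwa [zpow_natCast]) x _ _, muEig]
  simp only [mul_neg, sub_eq_add_neg]

theorem muEig_emod (hω0 : ω ≠ 0) (hω : ω ^ n = 1) (x : ℤ) :
    muEig p r n ω (x % n) = muEig p r n ω x := by
  simp only [muEig, zpow_emod_mul hω0 hω]

theorem lamEig_eq_muEig_add_half (hω : IsPrimitiveRoot ω n) (hn : n = 2 ^ r * p) (hr : 2 ≤ r)
    (hodd : Odd p) {x : ℤ} (h2x : 2 ∣ x) (hpx : ¬ (p : ℤ) ∣ x) :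
    lamEig p r n ω x = muEig p r n ω (x + (n / 2 : ℕ)) := by
  have hn0 := pos_of_eq_two_pow_mul hn hodd.pos
  have hhalf := div_two_eq_of_eq_two_pow_mul hn (by omega)
  have hω0 : ω ≠ 0 := hω.ne_zero hn0.ne'
  have hN := hω.pow_div_two_eq_neg_one (two_dvd_of_eq_two_pow_mul hn (by omega)) hn0
  have hζ : IsPrimitiveRoot (ω ^ 2 ^ r) p := hω.pow hn0 hn
  have hζx : (ω ^ 2 ^ r) ^ x ≠ 1 := mt (hζ.zpow_eq_one_iff_dvd x).mp hpx
  obtain ⟨k, hk⟩ := hodd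
  have hζxp : ((ω ^ 2 ^ r) ^ x) ^ (2 * k + 1) = 1 := by
    rw [← hk, ← zpow_natCast, ← zpow_mul, mul_comm, zpow_mul, zpow_natCast, hζ.pow_eq_one,
      one_zpow]
  have hζhalf : (ω ^ 2 ^ r) ^ (x + (n / 2 : ℕ)) = (ω ^ 2 ^ r) ^ x := by
    rw [zpow_add₀ (pow_ne_zero _ hω0), zpow_natCast,
      (hζ.pow_eq_one_iff_dvd _).mpr (hhalf ▸ dvd_mul_left _ _), mul_one]
  have hx_even : Even x := even_iff_two_dvd.mpr h2x
  have hhalf_even : Even (x + (n / 2 : ℕ)) :=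
    hx_even.add (even_iff_two_dvd.mpr (mod_cast two_dvd_of_eq_two_pow_mul hhalf (by omega)))
  rw [lamEig_eq hω0 hN, muEig_eq hω0 hN, hζhalf, zpow_add₀ hω0, zpow_natCast, hN,
    hhalf_even.neg_one_zpow, hx_even.neg_one_zpow, show (p - 1) / 2 = k by omega]
  linear_combination (2 * ω ^ x) * geom_sum_add_geom_sum_inv_eq_one hζx hζxp

theorem lamEig_eq_muEig_of_odd_or_dvd (hω : IsPrimitiveRoot ω n) (hn : n = 2 ^ r * p)
    (hr : 1 ≤ r) (hp : 0 < p) {x : ℤ} (hx : Odd x ∨ (p : ℤ) ∣ x) :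
    lamEig p r n ω x = muEig p r n ω x := by
  have hn0 := pos_of_eq_two_pow_mul hn hp
  have hω0 : ω ≠ 0 := hω.ne_zero hn0.ne'
  have hN := hω.pow_div_two_eq_neg_one (two_dvd_of_eq_two_pow_mul hn (by omega)) hn0
  rw [lamEig_eq hω0 hN, muEig_eq hω0 hN]
  rcases hx with hx_odd | hpx
  · rw [hx_odd.neg_one_zpow]
    ring
  · rw [((hω.pow hn0 hn).zpow_eq_one_iff_dvd x).mpr hpx, inv_one]

lemma exists_pos_eq_two_pow_iff_of_dvd {g : ℕ} (hp : p.Prime) (hodd : Odd p)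
    (hg : g ∣ 2 ^ r * p) : (∃ m, 0 < m ∧ g = 2 ^ m) ↔ 2 ∣ g ∧ ¬ p ∣ g := by
  constructor
  · rintro ⟨m, hm, rfl⟩
    refine ⟨dvd_pow_self 2 hm.ne', fun hpm => hp.one_lt.ne' ?_⟩
    exact hodd.coprime_two_right.eq_one_of_dvd (hp.dvd_of_dvd_pow hpm)
  · rintro ⟨h2g, hpg⟩
    have hg2 : g ∣ 2 ^ r :=
      (Nat.coprime_comm.mp (hp.coprime_iff_not_dvd.mpr hpg)).dvd_of_dvd_mul_right hg
    obtain ⟨m, -, rfl⟩ := (Nat.dvd_prime_pow Nat.prime_two).mp hg2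
    exact ⟨m, Nat.pos_of_ne_zero (by rintro rfl; norm_num at h2g), rfl⟩

theorem exists_gcd_eq_two_pow_iff (hp : p.Prime) (hodd : Odd p) (hn : n = 2 ^ r * p)
    (hr : 1 ≤ r) (x : ℤ) :
    (∃ m : ℕ, 0 < m ∧ Int.gcd x n = 2 ^ m) ↔ 2 ∣ x ∧ ¬ (p : ℤ) ∣ x := by
  have hgcd : Int.gcd x n ∣ 2 ^ r * p := hn ▸ Int.natCast_dvd_natCast.mp (Int.gcd_dvd_right x n)
  rw [exists_pos_eq_two_pow_iff_of_dvd hp hodd hgcd,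
    show (2 : ℤ) = (2 : ℕ) from rfl,
    Int.natCast_dvd_iff_dvd_gcd (two_dvd_of_eq_two_pow_mul hn (by omega)),
    Int.natCast_dvd_iff_dvd_gcd (hn ▸ dvd_mul_left p _)]

def halfShift (p n x : ℕ) : ℕ := if 2 ∣ x ∧ ¬ p ∣ x then (x + n / 2) % n else x

lemma halfShift_lt {x : ℕ} (hn : 0 < n) (hx : x < n) : halfShift p n x < n := by
  unfold halfShift
  split_ifs
  exacts [Nat.mod_lt _ hn, hx]

lemma halfShift_halfShift (hn : 2 ∣ n) (h2 : 2 ∣ n / 2) (hp : p ∣ n / 2) {x : ℕ} (hx : x < n) :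
    halfShift p n (halfShift p n x) = x := by
  have hdvd {d : ℕ} (hd : d ∣ n / 2) : d ∣ (x + n / 2) % n ↔ d ∣ x :=
    Nat.dvd_add_mod_iff hd (hd.trans (Nat.div_dvd_of_dvd hn))
  unfold halfShift
  by_cases hc : 2 ∣ x ∧ ¬ p ∣ x
  · rw [if_pos hc, if_pos (by rwa [hdvd h2, hdvd hp]), Nat.mod_add_mod, add_assoc,
      show n / 2 + n / 2 = n by omega, Nat.add_mod_right, Nat.mod_eq_of_lt hx]
  · rw [if_neg hc, if_neg hc]

theorem lamEig_eq_muEig_halfShift (hω : IsPrimitiveRoot ω n) (hn : n = 2 ^ r * p)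
    (hr : 2 ≤ r) (hodd : Odd p) (x : ℕ) :
    lamEig p r n ω x = muEig p r n ω (halfShift p n x) := by
  unfold halfShift
  split_ifs with hc
  · have hω0 : ω ≠ 0 := hω.ne_zero (pos_of_eq_two_pow_mul hn hodd.pos).ne'
    rw [Int.natCast_mod, Nat.cast_add, muEig_emod hω0 hω.pow_eq_one]
    exact lamEig_eq_muEig_add_half hω hn hr hodd (mod_cast hc.1) (mod_cast hc.2)
  · refine lamEig_eq_muEig_of_odd_or_dvd hω hn (by omega) hodd.pos ?_
    rw [← Int.not_even_iff_odd, even_iff_two_dvd]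
    exact_mod_cast (not_and_or.mp hc).imp_right not_not.mp

end Eigenvalues

/-- For `n = 2^r·p` (`p` an odd prime, `r ≥ 2`) and `ω` a primitive `n`-th root of
unity: `λ_x = μ_{x+n/2}` when `gcd(x, n) = 2^m` for some `m > 0`, and `λ_x = μ_x`
otherwise; in particular the multisets `{λ_x : x ∈ ℤ/nℤ}` and `{μ_x : x ∈ ℤ/nℤ}`
coincide. -/
theorem lam_eq_mu (p r : ℕ) (hp : p.Prime) (hodd : Odd p) (hr : 2 ≤ r)
    (n : ℕ) (hn : n = 2 ^ r * p) (ω : ℂ) (hω : IsPrimitiveRoot ω n) :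
    (∀ x : ℤ,
      ((∃ m : ℕ, 0 < m ∧ Int.gcd x n = 2 ^ m) →
        lamEig p r n ω x = muEig p r n ω (x + ((n / 2 : ℕ) : ℤ))) ∧
      (¬ (∃ m : ℕ, 0 < m ∧ Int.gcd x n = 2 ^ m) →
        lamEig p r n ω x = muEig p r n ω x)) ∧
    (Multiset.range n).map (fun x => lamEig p r n ω (x : ℤ)) =
      (Multiset.range n).map (fun x => muEig p r n ω (x : ℤ)) := by
  refine ⟨fun x => ?_, ?_⟩
  · rw [exists_gcd_eq_two_pow_iff hp hodd hn (by omega)]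
    refine ⟨fun h => lamEig_eq_muEig_add_half hω hn hr hodd h.1 h.2, fun h => ?_⟩
    refine lamEig_eq_muEig_of_odd_or_dvd hω hn (by omega) hp.pos ?_
    rw [← Int.not_even_iff_odd, even_iff_two_dvd]
    exact (not_and_or.mp h).imp_right not_not.mp
  have hhalf := div_two_eq_of_eq_two_pow_mul hn (by omega)
  simp only [bind, pure, Multiset.bind_singleton, Multiset.map_map]
  exact Multiset.map_range_eq_map_of_involution (halfShift p n)
    (fun x => halfShift_lt (pos_of_eq_two_pow_mul hn hp.pos))
    (fun x => halfShift_halfShift (two_dvd_of_eq_two_pow_mul hn (by omega))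
      (two_dvd_of_eq_two_pow_mul hhalf (by omega)) (hhalf ▸ dvd_mul_left p _))
    (fun x _ => lamEig_eq_muEig_halfShift hω hn hr hodd x)
end

section
/- Let p be an odd prime, let r ≥ 2 be an integer, let n = 2^r·p, and let ω ∈ ℂ be a primitive n-th root of unity. Let A = {1 + i·2^r : 0 ≤ i ≤ (p−1)/2} ∪ {1 + j·2^r + p·2^{r−1} : 1 ≤ j ≤ (p−1)/2} ⊆ ℤ/nℤ, and for x ∈ ℤ set λ_x = Σ_{a ∈ A} ω^{x·a}. If λ_x = λ_y for integers x, y, then x ≡ y (mod n). Equivalently, the circulant graph X = Cay(ℤ/nℤ, A) has n pairwise distinct eigenvalues. -/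
/-- The connection set
`A = {1 + i·2^r : 0 ≤ i ≤ (p−1)/2} ∪ {1 + j·2^r + p·2^{r−1} : 1 ≤ j ≤ (p−1)/2}`
in `ℤ/nℤ`, `n = 2^r·p`. -/
def connA (n r p : ℕ) : Finset (ZMod n) :=
  ((Finset.range ((p - 1) / 2 + 1)).image fun i => ((1 + i * 2 ^ r : ℕ) : ZMod n)) ∪
  ((Finset.Icc 1 ((p - 1) / 2)).image fun j =>
    ((1 + j * 2 ^ r + p * 2 ^ (r - 1) : ℕ) : ZMod n))

/-- `λ_x = Σ_{a ∈ A} ω^{x·a}`. -/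
noncomputable def lamA (n r p : ℕ) (ω : ℂ) (x : ℤ) : ℂ :=
  ∑ a ∈ connA n r p, ω ^ (x * (a.val : ℤ))

/-!
Put `ζ = ω ^ 2 ^ r`, a primitive `p`-th root of unity, and `m = (p - 1) / 2`. As
`ω ^ (p * 2 ^ (r - 1)) = -1`, we get `λ_x = ω^x (S + (-1)^x (S - 1))` with `S = ∑_{i ≤ m} ζ^{x i}`.
So `λ_x = ω^x` for odd `x`, `λ_{2a} = p ω^{2a}` if `ζ^a = 1`, and otherwise, summing the geometric
series, `λ_{2a} = ω^{2a} T` with `T = (1 - v) / (1 + v)`, `v = ζ^a`.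

For `|v| = 1` this Cayley transform `T` is purely imaginary, and `|T|` is not a natural number `k`:
`T² = -k²` gives `(1 + k²)(v + v⁻¹) = 2(1 - k²)`, so the algebraic integer `v + v⁻¹` is a rational
integer and `1 + k² ∣ 4`, leaving `v = 1` or `v² = -1`, both impossible for a root of unity of odd
order. Comparing absolute values thus separates the three kinds of eigenvalues, and within a kind
`λ_x = λ_y` forces `ω^x = ω^y`. The one delicate case is `ω^{2a} T_a = ω^{2b} T_b` with
`T_a = -T_b`: then `ω^{2a} = -ω^{2b}`, so `ζ^a = ζ^b` because `2 ^ (r - 1)` is even, and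
`T_a = T_b = 0`.
-/

open Finset ComplexConjugate

theorem ZMod.sum_image_natCast_val {M : Type*} [AddCommMonoid M] {n : ℕ} {s : Finset ℕ}
    (hs : ∀ k ∈ s, k < n) (g : ℕ → M) :
    ∑ a ∈ s.image (Nat.cast : ℕ → ZMod n), g a.val = ∑ k ∈ s, g k := by
  rw [sum_image fun a ha b hb hab => ?_]
  · exact sum_congr rfl fun k hk => by rw [ZMod.val_natCast_of_lt (hs k hk)]
  · simpa [ZMod.val_natCast_of_lt (hs a ha), ZMod.val_natCast_of_lt (hs b hb)] using
      congrArg ZMod.val hab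

theorem sum_Icc_one_pow {R : Type*} [CommRing R] (c : R) (m : ℕ) :
    ∑ j ∈ Icc 1 m, c ^ j = ∑ i ∈ range (m + 1), c ^ i - 1 := by
  rw [sum_range_succ', pow_zero, add_sub_cancel_right, ← Ico_add_one_right_eq_Icc,
    sum_Ico_eq_sum_range, add_tsub_cancel_right]
  simp only [add_comm 1]

theorem geom_sum_sq_mul_one_add {R : Type*} [CommRing R] [IsDomain R] {v : R} {m : ℕ}
    (hv : v ^ (2 * m + 1) = 1) (hv1 : v ≠ 1) :
    (∑ i ∈ range (m + 1), (v ^ 2) ^ i) * (1 + v) = 1 := by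
  have h := geom_sum_mul (v ^ 2) (m + 1)
  rw [← pow_mul, show 2 * (m + 1) = 2 * m + 1 + 1 by ring, pow_succ v (2 * m + 1), hv, one_mul] at h
  have : (v - 1) * ((∑ i ∈ range (m + 1), (v ^ 2) ^ i) * (1 + v) - 1) = 0 := by
    linear_combination h
  rcases mul_eq_zero.mp this with h1 | h1
  · exact absurd (sub_eq_zero.mp h1) hv1
  · exact sub_eq_zero.mp h1

theorem one_add_ne_zero_of_pow_eq_one {R : Type*} [CommRing R] [CharZero R]
    {p : ℕ} (hp : Odd p) {v : R} (hvp : v ^ p = 1) : 1 + v ≠ 0 := by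
  intro h
  obtain rfl : v = -1 := by linear_combination h
  norm_num [hp.neg_one_pow] at hvp

theorem isIntegral_of_pow_eq_one {R : Type*} [CommRing R] {v : R} {p : ℕ} (hp : 0 < p)
    (hv : v ^ p = 1) : IsIntegral ℤ v :=
  IsIntegral.of_pow hp (hv ▸ isIntegral_one)

theorem dvd_of_isIntegral_of_mul_eq {K : Type*} [Field K] [CharZero K] {w : K}
    (hw : IsIntegral ℤ w) {a b : ℤ} (ha : a ≠ 0) (h : a * w = b) : a ∣ b := by
  have hq : algebraMap ℚ K (b / a) = w := by
    rw [map_div₀, map_intCast, map_intCast, div_eq_iff (by exact_mod_cast ha), ← h, mul_comm]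
  obtain ⟨d, hd⟩ := IsIntegrallyClosed.isIntegral_iff.mp
    ((isIntegral_algebraMap_iff (algebraMap ℚ K).injective).mp (hq ▸ hw))
  refine ⟨d, ?_⟩
  rw [algebraMap_int_eq, eq_intCast, eq_div_iff (by exact_mod_cast ha)] at hd
  exact_mod_cast (hd.symm.trans (mul_comm _ _))

theorem IsPrimitiveRoot.intModEq_of_zpow_eq_zpow {K : Type*} [Field K] {ζ : K} {k : ℕ}
    (h : IsPrimitiveRoot ζ k) (hk : 0 < k) {a b : ℤ} (hab : ζ ^ a = ζ ^ b) : a ≡ b [ZMOD k] := by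
  have h0 : ζ ≠ 0 := h.ne_zero hk.ne'
  refine (Int.modEq_iff_dvd.mpr ((h.zpow_eq_one_iff_dvd _).mp ?_)).symm
  rw [zpow_sub₀ h0, hab, div_self (zpow_ne_zero _ h0)]

noncomputable def cayley (v : ℂ) : ℂ := (1 - v) / (1 + v)

theorem conj_cayley {v : ℂ} (hv : ‖v‖ = 1) : conj (cayley v) = -cayley v := by
  have hv0 : v ≠ 0 := by rintro rfl; simp at hv
  rw [cayley, map_div₀, map_sub, map_add, map_one, ← Complex.inv_eq_conj hv]
  rcases eq_or_ne (1 + v) 0 with h | h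
  · obtain rfl : v = -1 := by linear_combination h
    norm_num
  · have h' : 1 + v⁻¹ ≠ 0 := by
      rwa [← mul_ne_zero_iff_left hv0, mul_add, mul_inv_cancel₀ hv0, mul_one, add_comm]
    rw [neg_div', div_eq_div_iff h' h]
    field_simp
    ring

theorem cayley_sq_eq_neg_norm_sq {v : ℂ} (hv : ‖v‖ = 1) :
    cayley v ^ 2 = -(‖cayley v‖ : ℂ) ^ 2 := by
  have := Complex.mul_conj' (cayley v)
  rw [conj_cayley hv] at this
  linear_combination -this

theorem cayley_sq_ne_neg_natCast_sq {p : ℕ} (hp : Odd p) {v : ℂ} (hvp : v ^ p = 1) (hv1 : v ≠ 1)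
    (k : ℕ) : cayley v ^ 2 ≠ -(k : ℂ) ^ 2 := by
  intro h
  have hv' : 1 + v ≠ 0 := one_add_ne_zero_of_pow_eq_one hp hvp
  have key : (1 + k ^ 2) * (1 + v ^ 2) = (2 - 2 * k ^ 2) * v := by
    rw [cayley, div_pow, div_eq_iff (pow_ne_zero 2 hv')] at h
    linear_combination h
  have hdvd : (1 + k ^ 2 : ℤ) ∣ 2 - 2 * k ^ 2 := by
    refine dvd_of_isIntegral_of_mul_eq (w := v + v⁻¹) ?_ (by positivity) ?_
    · refine (isIntegral_of_pow_eq_one hp.pos hvp).add (isIntegral_of_pow_eq_one hp.pos ?_)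
      rw [inv_pow, hvp, inv_one]
    · have hv0 : v ≠ 0 := by rintro rfl; simp [hp.pos.ne'] at hvp
      push_cast
      field_simp
      linear_combination key
  have hk : k ≤ 1 := by
    have h4 : (1 + k ^ 2 : ℤ) ∣ 4 := by
      rw [show (4 : ℤ) = 2 * (1 + k ^ 2) + (2 - 2 * k ^ 2) by ring]
      exact dvd_add (dvd_mul_left _ _) hdvd
    have := Int.le_of_dvd (by norm_num) h4
    nlinarith
  interval_cases k
  · exact hv1 (by linear_combination (exp := 2) key)
  · have hsq : v ^ 2 = -1 := by linear_combination key / 2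
    have : (v ^ 2) ^ p = (-1) ^ p := by rw [hsq]
    rw [← pow_mul, mul_comm, pow_mul, hvp, one_pow, hp.neg_one_pow] at this
    norm_num at this

theorem cayley_ne_zero {p : ℕ} (hp : Odd p) {v : ℂ} (hvp : v ^ p = 1) (hv1 : v ≠ 1) :
    cayley v ≠ 0 :=
  div_ne_zero (sub_ne_zero.mpr hv1.symm) (one_add_ne_zero_of_pow_eq_one hp hvp)

theorem norm_cayley_ne_natCast {p : ℕ} (hp : Odd p) {v : ℂ} (hvp : v ^ p = 1) (hv1 : v ≠ 1)
    (k : ℕ) : ‖cayley v‖ ≠ k := fun h => cayley_sq_ne_neg_natCast_sq hp hvp hv1 k <| by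
  rw [cayley_sq_eq_neg_norm_sq (Complex.norm_eq_one_of_pow_eq_one hvp hp.pos.ne'), h]
  norm_cast

theorem eq_of_natCast_mul_eq_natCast_mul {w w' : ℂ} (hw : ‖w‖ = 1) (hw' : ‖w'‖ = 1) {k l : ℕ}
    (hk : k ≠ 0) (h : (k : ℂ) * w = l * w') : w = w' := by
  have hkl : (k : ℂ) = l := by
    have := congrArg norm h
    simp only [norm_mul, Complex.norm_natCast, hw, hw', mul_one] at this
    exact_mod_cast this
  rw [← hkl] at h
  exact mul_left_cancel₀ (Nat.cast_ne_zero.mpr hk) h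

theorem natCast_mul_ne_mul_cayley {p : ℕ} (hp : Odd p) {w w' v : ℂ} (hw : ‖w‖ = 1)
    (hw' : ‖w'‖ = 1) (hvp : v ^ p = 1) (hv1 : v ≠ 1) (k : ℕ) : (k : ℂ) * w ≠ w' * cayley v := by
  intro h
  apply norm_cayley_ne_natCast hp hvp hv1 k
  simpa [hw, hw'] using (congrArg norm h).symm

theorem zpow_two_mul_eq_of_mul_cayley_eq {r : ℕ} (hr : 2 ≤ r) {ω : ℂ} (hω : ‖ω‖ = 1) {a b : ℤ}
    (ha : cayley ((ω ^ 2 ^ r) ^ a) ≠ 0)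
    (h : ω ^ (2 * a) * cayley ((ω ^ 2 ^ r) ^ a) = ω ^ (2 * b) * cayley ((ω ^ 2 ^ r) ^ b)) :
    ω ^ (2 * a) = ω ^ (2 * b) := by
  have hnorm : ∀ z : ℤ, ‖ω ^ z‖ = 1 := fun z => by rw [norm_zpow, hω, one_zpow]
  have hv : ∀ z : ℤ, (ω ^ 2 ^ r) ^ z = (ω ^ (2 * z)) ^ 2 ^ (r - 1) := fun z => by
    rw [← zpow_natCast, ← zpow_natCast, ← zpow_mul, ← zpow_mul,
      ← Nat.two_pow_pred_mul_two (by omega : 0 < r)]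
    push_cast
    ring_nf
  have hsq : cayley ((ω ^ 2 ^ r) ^ a) ^ 2 = cayley ((ω ^ 2 ^ r) ^ b) ^ 2 := by
    have := congrArg norm h
    simp only [norm_mul, hnorm, one_mul] at this
    rw [cayley_sq_eq_neg_norm_sq, cayley_sq_eq_neg_norm_sq, this] <;>
      simp only [norm_pow, norm_zpow, hω, one_pow, one_zpow]
  rcases sq_eq_sq_iff_eq_or_eq_neg.mp hsq with hab | hab
  · exact mul_right_cancel₀ ha (hab ▸ h)
  · have hneg : ω ^ (2 * a) = -ω ^ (2 * b) :=
      mul_right_cancel₀ ha (by rw [h, hab]; ring)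
    have hvab : (ω ^ 2 ^ r) ^ a = (ω ^ 2 ^ r) ^ b := by
      rw [hv, hv, hneg, Even.neg_pow ((Nat.even_pow' (by omega)).mpr even_two)]
    rw [hvab] at hab
    exact absurd (by linear_combination hab / 2) (hvab ▸ ha)

def connNat (r p : ℕ) : Finset ℕ :=
  (range ((p - 1) / 2 + 1)).image (fun i => 1 + i * 2 ^ r) ∪
    (Icc 1 ((p - 1) / 2)).image (fun j => 1 + j * 2 ^ r + p * 2 ^ (r - 1))

theorem connA_eq_image_connNat (n r p : ℕ) :
    connA n r p = (connNat r p).image (Nat.cast : ℕ → ZMod n) := by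
  simp only [connA, connNat, image_union, image_image]
  rfl

theorem lt_of_mem_connNat {r p n : ℕ} (hodd : Odd p) (hr : 2 ≤ r) (hn : n = 2 ^ r * p) {k : ℕ}
    (hk : k ∈ connNat r p) : k < n := by
  obtain ⟨m, rfl⟩ := hodd
  have h2r : 2 ^ r = 2 * 2 ^ (r - 1) := by rw [mul_comm, Nat.two_pow_pred_mul_two (by omega)]
  have hR : 2 ≤ 2 ^ (r - 1) := Nat.le_self_pow (by omega) 2
  simp only [connNat, mem_union, mem_image, mem_range, mem_Icc] at hk
  simp only [Nat.add_sub_cancel, Nat.mul_div_cancel_left _ two_pos] at hk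
  rcases hk with ⟨i, hi, rfl⟩ | ⟨j, hj, rfl⟩ <;> rw [hn, h2r] <;> nlinarith

theorem sum_connNat {M : Type*} [AddCommMonoid M] {r p : ℕ} (hodd : Odd p) (hr : 0 < r)
    (g : ℕ → M) :
    ∑ k ∈ connNat r p, g k = ∑ i ∈ range ((p - 1) / 2 + 1), g (1 + i * 2 ^ r) +
      ∑ j ∈ Icc 1 ((p - 1) / 2), g (1 + j * 2 ^ r + p * 2 ^ (r - 1)) := by
  have h2r : 2 ^ r = 2 ^ (r - 1) * 2 := (Nat.two_pow_pred_mul_two hr).symm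
  have hR : 0 < 2 ^ (r - 1) := by positivity
  have hdisj : Disjoint ((range ((p - 1) / 2 + 1)).image (fun i => 1 + i * 2 ^ r))
      ((Icc 1 ((p - 1) / 2)).image (fun j => 1 + j * 2 ^ r + p * 2 ^ (r - 1))) := by
    simp only [disjoint_left, mem_image, not_exists, not_and]
    rintro _ ⟨i, -, rfl⟩ j - h
    have : 2 ^ (r - 1) * (2 * i) = 2 ^ (r - 1) * (2 * j + p) := by rw [h2r] at h; linarith
    have := Nat.eq_of_mul_eq_mul_left hR this
    obtain ⟨m, rfl⟩ := hodd
    omega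
  rw [connNat, sum_union hdisj, sum_image, sum_image]
  · intro a _ b _ h
    simpa [hR.ne'] using h
  · intro a _ b _ h
    simpa [hR.ne'] using h

section lamA

variable {n r p : ℕ} (hodd : Odd p) (hr : 2 ≤ r) (hn : n = 2 ^ r * p) {ω : ℂ}
  (hω : IsPrimitiveRoot ω n)
include hodd hr hn hω

theorem lamA_eq (x : ℤ) :
    lamA n r p ω x = ω ^ x * (∑ i ∈ range ((p - 1) / 2 + 1), ((ω ^ 2 ^ r) ^ x) ^ i +
      (-1) ^ x * (∑ i ∈ range ((p - 1) / 2 + 1), ((ω ^ 2 ^ r) ^ x) ^ i - 1)) := by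
  have hn0 : 0 < n := by rw [hn]; exact Nat.mul_pos (by positivity) hodd.pos
  have hω0 : ω ≠ 0 := hω.ne_zero hn0.ne'
  have hhalf : ω ^ (p * 2 ^ (r - 1)) = -1 := by
    refine (hω.pow hn0 ?_).eq_neg_one_of_two_right
    rw [hn, ← Nat.two_pow_pred_mul_two (by omega : 0 < r)]
    ring
  set c := (ω ^ 2 ^ r) ^ x
  have e1 : ∀ i : ℕ, ω ^ (x * ((1 + i * 2 ^ r : ℕ) : ℤ)) = ω ^ x * c ^ i := by
    intro i
    simp only [c, ← zpow_natCast, ← zpow_mul, ← zpow_add₀ hω0]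
    push_cast
    ring_nf
  have e2 : ∀ j : ℕ, ω ^ (x * ((1 + j * 2 ^ r + p * 2 ^ (r - 1) : ℕ) : ℤ)) =
      ω ^ x * ((-1) ^ x * c ^ j) := by
    intro j
    simp only [c, ← hhalf, ← zpow_natCast, ← zpow_mul, ← zpow_add₀ hω0]
    push_cast
    ring_nf
  rw [lamA, connA_eq_image_connNat, ZMod.sum_image_natCast_val
    (fun k => lt_of_mem_connNat hodd hr hn) fun k => ω ^ (x * (k : ℤ)), sum_connNat hodd (by omega)]
  simp only [e1, e2, ← mul_sum, sum_Icc_one_pow, mul_add]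

theorem lamA_eq_natCast_mul_or_mul_cayley (x : ℤ) :
    (∃ k : ℕ, k ≠ 0 ∧ lamA n r p ω x = k * ω ^ x) ∨
      ∃ a : ℤ, x = 2 * a ∧ (ω ^ 2 ^ r) ^ a ≠ 1 ∧
        lamA n r p ω x = ω ^ x * cayley ((ω ^ 2 ^ r) ^ a) := by
  have hζ : IsPrimitiveRoot (ω ^ 2 ^ r) p :=
    hω.pow (by rw [hn]; exact Nat.mul_pos (by positivity) hodd.pos) hn
  rw [lamA_eq hodd hr hn hω]
  obtain ⟨a, rfl | rfl⟩ := Int.even_or_odd' x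
  · set v := (ω ^ 2 ^ r) ^ a
    have hc : (ω ^ 2 ^ r) ^ (2 * a) = v ^ 2 := by rw [mul_comm, zpow_mul, zpow_ofNat]
    rw [Even.neg_one_zpow ⟨a, two_mul a⟩, one_mul, hc]
    obtain ⟨m, rfl⟩ := hodd
    simp only [Nat.add_sub_cancel, Nat.mul_div_cancel_left _ two_pos]
    by_cases hv1 : v = 1
    · refine .inl ⟨2 * m + 1, by omega, ?_⟩
      simp only [hv1, one_pow, sum_const, card_range, nsmul_eq_mul, mul_one]
      push_cast
      ring
    · have hvp : v ^ (2 * m + 1) = 1 := by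
        rw [← zpow_natCast, ← zpow_mul, mul_comm, zpow_mul, zpow_natCast, hζ.pow_eq_one, one_zpow]
      refine .inr ⟨a, by ring, hv1, ?_⟩
      rw [cayley]
      congr 1
      rw [eq_div_iff (one_add_ne_zero_of_pow_eq_one ⟨m, rfl⟩ hvp)]
      linear_combination 2 * geom_sum_sq_mul_one_add hvp hv1
  · refine .inl ⟨1, one_ne_zero, ?_⟩
    rw [Odd.neg_one_zpow ⟨a, rfl⟩]
    ring

theorem lamA_modEq {x y : ℤ} (h : lamA n r p ω x = lamA n r p ω y) : x ≡ y [ZMOD n] := by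
  have hn0 : 0 < n := by rw [hn]; exact Nat.mul_pos (by positivity) hodd.pos
  have hζ : IsPrimitiveRoot (ω ^ 2 ^ r) p := hω.pow hn0 hn
  have hω1 : ‖ω‖ = 1 := hω.norm'_eq_one hn0.ne'
  have hnorm : ∀ z : ℤ, ‖ω ^ z‖ = 1 := fun z => by rw [norm_zpow, hω1, one_zpow]
  have hpow : ∀ a : ℤ, ((ω ^ 2 ^ r) ^ a) ^ p = 1 := fun a => by
    rw [← zpow_natCast, ← zpow_mul, mul_comm, zpow_mul, zpow_natCast, hζ.pow_eq_one, one_zpow]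
  refine hω.intModEq_of_zpow_eq_zpow hn0 ?_
  rcases lamA_eq_natCast_mul_or_mul_cayley hodd hr hn hω x with ⟨k, hk, hx⟩ | ⟨a, rfl, ha, hx⟩ <;>
    rcases lamA_eq_natCast_mul_or_mul_cayley hodd hr hn hω y with ⟨l, -, hy⟩ | ⟨b, rfl, hb, hy⟩ <;>
    rw [hx, hy] at h
  · exact eq_of_natCast_mul_eq_natCast_mul (hnorm x) (hnorm y) hk h
  · exact absurd h (natCast_mul_ne_mul_cayley hodd (hnorm _) (hnorm _) (hpow b) hb k)
  · exact absurd h.symm (natCast_mul_ne_mul_cayley hodd (hnorm _) (hnorm _) (hpow a) ha l)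
  · exact zpow_two_mul_eq_of_mul_cayley_eq hr hω1 (cayley_ne_zero hodd (hpow a) ha) h

end lamA

theorem no_repeated_eigenvalues_general (p r : ℕ) (hodd : Odd p)
    (hr : 2 ≤ r) (n : ℕ) (hn : n = 2 ^ r * p)
    (ω : ℂ) (hω : IsPrimitiveRoot ω n) :
    (∀ x y : ℤ, lamA n r p ω x = lamA n r p ω y → Int.ModEq (n : ℤ) x y) ∧
    Function.Injective (fun x : ZMod n => lamA n r p ω ((x.val : ℤ))) := by
  refine ⟨fun x y => lamA_modEq hodd hr hn hω, fun a b hab => ?_⟩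
  have : NeZero n := ⟨by rw [hn]; exact (Nat.mul_pos (by positivity) hodd.pos).ne'⟩
  simpa using (ZMod.intCast_eq_intCast_iff _ _ n).mpr (lamA_modEq hodd hr hn hω hab)

/-- For `n = 2^r·p` (`p` an odd prime, `r ≥ 2`) and `ω` a primitive `n`-th root of
unity, the eigenvalues `λ_x = Σ_{a ∈ A} ω^{x·a}` of the circulant graph
`Cay(ℤ/nℤ, A)` satisfy: `λ_x = λ_y` implies `x ≡ y (mod n)`; equivalently the `n`
eigenvalues are pairwise distinct. -/
theorem no_repeated_eigenvalues (p r : ℕ) (hp : p.Prime) (hodd : Odd p)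
    (hr : 2 ≤ r) (n : ℕ) [NeZero n] (hn : n = 2 ^ r * p)
    (ω : ℂ) (hω : IsPrimitiveRoot ω n) :
    (∀ x y : ℤ, lamA n r p ω x = lamA n r p ω y → Int.ModEq (n : ℤ) x y) ∧
    Function.Injective (fun x : ZMod n => lamA n r p ω ((x.val : ℤ))) :=
  no_repeated_eigenvalues_general p r hodd hr n hn ω hω
end

section
/- Let n ≥ 1, let t be an integer, and let a₁, …, a_m, b₁, …, b_m ∈ ℤ/nℤ satisfy a_i = t·b_i in ℤ/nℤ and gcd(a_i, n) = gcd(b_i, n) for every 1 ≤ i ≤ m. Then there exists an integer τ with gcd(τ, n) = 1 such that a_i = τ·b_i in ℤ/nℤ for every 1 ≤ i ≤ m. -/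
/-!
Put `gᵢ = gcd(bᵢ, n)`. Dividing `aᵢ ≡ t bᵢ (mod n)` by `gᵢ = gcd(aᵢ, n)` gives
`aᵢ/gᵢ ≡ t · bᵢ/gᵢ (mod n/gᵢ)` with `aᵢ/gᵢ` a unit mod `n/gᵢ`, so `t` is a unit mod `n/gᵢ`,
hence mod `M = lcm (n/gᵢ)`, which divides `n`. Lift `t` to a unit `τ` mod `n` with `τ ≡ t (mod M)`;
as `n ∣ (n/gᵢ) bᵢ ∣ (τ - t) bᵢ`, this `τ` still satisfies `aᵢ = τ bᵢ`.
-/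

theorem Int.isCoprime_div_gcd_of_modEq_mul {a b t n : ℤ} (hn : n ≠ 0) (h : a ≡ t * b [ZMOD n])
    (hg : a.gcd n = b.gcd n) : IsCoprime t (n / b.gcd n) := by
  set g := b.gcd n
  have hg0 : (g : ℤ) ≠ 0 := by simp [g, Int.gcd_eq_zero_iff, hn]
  obtain ⟨a', rfl⟩ := hg ▸ Int.gcd_dvd_left a n
  obtain ⟨b', hb⟩ : (g : ℤ) ∣ b := Int.gcd_dvd_left b n
  obtain ⟨n', hn'⟩ : (g : ℤ) ∣ n := Int.gcd_dvd_right b n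
  rw [hn', Int.mul_ediv_cancel_left _ hg0]
  have ha' : IsCoprime a' n' := by
    rw [Int.isCoprime_iff_gcd_eq_one]
    rw [hn', Int.gcd_mul_left, Int.natAbs_natCast] at hg
    exact (Nat.mul_eq_left (by exact_mod_cast hg0)).mp hg
  have hmod : a' ≡ t * b' [ZMOD n'] := by
    rw [hb, hn', mul_left_comm] at h
    exact h.mul_left_cancel' hg0
  obtain ⟨k, hk⟩ := hmod.dvd
  rw [sub_eq_iff_eq_add'] at hk
  exact (hk ▸ ha'.add_mul_left_left k).of_mul_left_left

namespace ZMod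

theorem isCoprime_div_gcd_val_of_eq_intCast_mul {n : ℕ} [NeZero n] {a b : ZMod n} {t : ℤ}
    (h : a = t * b) (hg : a.val.gcd n = b.val.gcd n) : IsCoprime t (n / b.val.gcd n : ℕ) := by
  have hmod : (a.val : ℤ) ≡ t * b.val [ZMOD n] := by
    rw [← intCast_eq_intCast_iff]
    push_cast
    simpa only [natCast_zmod_val] using h
  have := Int.isCoprime_div_gcd_of_modEq_mul (by exact_mod_cast NeZero.ne n) hmod
    (by simpa only [Int.gcd_natCast_natCast] using hg)
  simpa only [Int.gcd_natCast_natCast, Int.natCast_div] using this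

theorem intCast_mul_eq_intCast_mul_of_modEq {n : ℕ} [NeZero n] {x : ZMod n} {u v : ℤ}
    (h : u ≡ v [ZMOD (n / x.val.gcd n : ℕ)]) : (u : ZMod n) * x = v * x := by
  rw [← natCast_zmod_val x, ← Int.cast_natCast, ← Int.cast_mul, ← Int.cast_mul,
    intCast_eq_intCast_iff_dvd_sub, ← sub_mul]
  calc (n : ℤ) = (n / x.val.gcd n : ℕ) * (x.val.gcd n : ℕ) := by
        exact_mod_cast (Nat.div_mul_cancel (Nat.gcd_dvd_right x.val n)).symm
    _ ∣ (v - u) * x.val := mul_dvd_mul h.dvd (Int.natCast_dvd_natCast.mpr (Nat.gcd_dvd_left _ _))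

theorem exists_gcd_eq_one_and_modEq {n M : ℕ} [NeZero n] (hM : M ∣ n) {t : ℤ} (ht : IsCoprime t M) :
    ∃ τ : ℤ, τ.gcd n = 1 ∧ τ ≡ t [ZMOD M] := by
  obtain ⟨u, hu⟩ := unitsMap_surjective hM (unitOfIsCoprime t ht)
  refine ⟨(u : ZMod n).val, by rw [Int.gcd_natCast_natCast]; exact val_coe_unit_coprime u, ?_⟩
  rw [← intCast_eq_intCast_iff]
  have hu' := congrArg Units.val hu
  rwa [unitsMap_val, coe_unitOfIsCoprime, ← natCast_val, ← Int.cast_natCast] at hu'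

end ZMod

open Finset in
/-- If `a_i = t·b_i` in `ℤ/nℤ` and `gcd(a_i, n) = gcd(b_i, n)` for all `i`, then
there is an integer `τ` coprime to `n` with `a_i = τ·b_i` in `ℤ/nℤ` for all `i`. -/
theorem exists_coprime_multiplier (n : ℕ) [NeZero n] (t : ℤ) (m : ℕ)
    (a b : Fin m → ZMod n)
    (h1 : ∀ i, a i = (t : ZMod n) * b i)
    (h2 : ∀ i, Nat.gcd (a i).val n = Nat.gcd (b i).val n) :
    ∃ τ : ℤ, Int.gcd τ n = 1 ∧ ∀ i, a i = (τ : ZMod n) * b i := by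
  set M := univ.lcm fun i => n / (b i).val.gcd n
  have hMn : M ∣ n := Finset.lcm_dvd fun i _ => Nat.div_dvd_of_dvd (Nat.gcd_dvd_right _ _)
  have htM : IsCoprime t M := by
    refine (IsCoprime.prod_right (t := univ) fun i _ =>
      ZMod.isCoprime_div_gcd_val_of_eq_intCast_mul (h1 i) (h2 i)).of_isCoprime_of_dvd_right ?_
    exact_mod_cast univ.lcm_dvd_prod _
  obtain ⟨τ, hτn, hτt⟩ := ZMod.exists_gcd_eq_one_and_modEq hMn htM
  refine ⟨τ, hτn, fun i => ?_⟩
  rw [h1 i, ZMod.intCast_mul_eq_intCast_mul_of_modEq (hτt.symm.of_dvd ?_)]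
  exact Int.natCast_dvd_natCast.mpr (dvd_lcm (mem_univ i))
end
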